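/- arXiv:2111.11385 — 7 statements merged into one kernel-verified Lean document; each statement's English description precedes it below -/
import Mathlib

section
/- Let Φ : M_d(ℂ) → M_d(ℂ) be a quantum channel in Stinespring form given by an isometry K : ℂ^d → ℂ^d⊗ℂ^{d_E}, and let Φ⊗Φ be the corresponding product channel on M_{d²}(ℂ). Define the Holevo capacity C(Φ) as the supremum over all finite ensembles ℰ = {(p_j, ψ_j)} (weights p_j ≥ 0 with ∑p_j = 1 and unit vectors ψ_j ∈ ℂ^d) of χ(ℰ) = S(Φ(∑_j p_j |ψ_j⟩⟨ψ_j|)) − ∑_j p_j S(Φ(|ψ_j⟩⟨ψ_j|)), and similarly C(Φ⊗Φ) using unit vectors in ℂ^d⊗ℂ^d. Let ρ_Av be a density matrix on ℂ^d with Φ(ρ_Av) positive definite, and assume: (i) for every density matrix γ on ℂ^d⊗ℂ^d with (Φ⊗Φ)(γ) positive definite, C(Φ⊗Φ) ≤ sup over unit vectors Ψ ∈ ℂ^d⊗ℂ^d of H((Φ⊗Φ)(|Ψ⟩⟨Ψ|), (Φ⊗Φ)(γ)); (ii) there is a density matrix Γ_Av on ℂ^d⊗ℂ^d with (Φ⊗Φ)(Γ_Av)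 positive definite such that C(Φ⊗Φ) = sup over unit vectors Ψ of H((Φ⊗Φ)(|Ψ⟩⟨Ψ|), (Φ⊗Φ)(Γ_Av)), and such that (Φ⊗Φ)(Γ_Av) ≠ (Φ⊗Φ)(ρ_Av⊗ρ_Av) implies C(Φ⊗Φ) > 2 C(Φ). Then C(Φ⊗Φ) > 2 C(Φ) if and only if there exists a unit vector Ψ ∈ ℂ^d⊗ℂ^d with H((Φ⊗Φ)(|Ψ⟩⟨Ψ|), (Φ⊗Φ)(ρ_Av⊗ρ_Av)) > 2 C(Φ). -/
open Matrix
open scoped Kronecker ComplexOrder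

attribute [local instance] Matrix.frobeniusNormedAddCommGroup Matrix.frobeniusNormedSpace

/-- The von Neumann entropy `S(A) = −∑ᵢ λᵢ log λᵢ` of a Hermitian matrix `A`
(with the convention `0 · log 0 = 0`; junk value `0` for non-Hermitian input). -/
noncomputable def entropy {n : Type*} [Fintype n] [DecidableEq n] (A : Matrix n n ℂ) : ℝ :=
  if h : A.IsHermitian then -∑ i, h.eigenvalues i * Real.log (h.eigenvalues i) else 0

/-- The matrix logarithm of a Hermitian matrix: the Hermitian matrix with the same
eigenvectors and eigenvalues `log λᵢ` (junk value `0` for non-Hermitian input). -/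
noncomputable def matLog {n : Type*} [Fintype n] [DecidableEq n] (A : Matrix n n ℂ) :
    Matrix n n ℂ :=
  if h : A.IsHermitian then
    (h.eigenvectorUnitary : Matrix n n ℂ) *
      Matrix.diagonal (fun i => (Real.log (h.eigenvalues i) : ℂ)) *
      (h.eigenvectorUnitary : Matrix n n ℂ)ᴴ
  else 0

/-- Entrywise (Bochner) integral over `(0, ∞)` of a matrix-valued function. -/
noncomputable def matIntegral {n : Type*} [Fintype n] (f : ℝ → Matrix n n ℂ) :
    Matrix n n ℂ :=
  Matrix.of fun i j => ∫ u in Set.Ioi (0 : ℝ), f u i j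

/-- Partial trace over the second factor `E`. -/
noncomputable def ptrace {B E : Type*} [Fintype E] (M : Matrix (B × E) (B × E) ℂ) :
    Matrix B B ℂ :=
  Matrix.of fun b b' => ∑ e, M (b, e) (b', e)

/-- The quantum channel in Stinespring form associated with `K : ℂ^A → ℂ^B ⊗ ℂ^E`:
`Φ(ρ) = Tr_E (K ρ Kᴴ)`. -/
noncomputable def stine {A B E : Type*} [Fintype A] [Fintype B] [Fintype E]
    (K : Matrix (B × E) A ℂ) (ρ : Matrix A A ℂ) : Matrix B B ℂ :=
  ptrace (K * ρ * Kᴴ)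

/-- The pure state `|ψ⟩⟨ψ|`. -/
noncomputable def pureState {A : Type*} (ψ : A → ℂ) : Matrix A A ℂ :=
  Matrix.vecMulVec ψ (star ψ)

/-- A density matrix: positive semidefinite with trace 1. -/
def IsDensity {A : Type*} [Fintype A] [DecidableEq A] (ρ : Matrix A A ℂ) : Prop :=
  ρ.PosSemidef ∧ ρ.trace = 1

/-- A unit vector. -/
def unitVec {A : Type*} [Fintype A] (ψ : A → ℂ) : Prop :=
  ∑ i, Complex.normSq (ψ i) = 1

/-- The curve `ψ_t = √(1−t²) ψ + t χ` of unit vectors. -/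
noncomputable def psit {A : Type*} (ψ χ : A → ℂ) (t : ℝ) : A → ℂ :=
  fun a => (Real.sqrt (1 - t ^ 2) : ℂ) * ψ a + (t : ℂ) * χ a

/-- The Stinespring isometry of the product channel: the Kronecker product `K_A ⊗ K_C`
with its output reindexed as `(ℂ^B ⊗ ℂ^D) ⊗ (ℂ^E ⊗ ℂ^F)`. -/
noncomputable def prodK {dA dB dE dC dD dF : ℕ}
    (KA : Matrix (Fin dB × Fin dE) (Fin dA) ℂ)
    (KC : Matrix (Fin dD × Fin dF) (Fin dC) ℂ) :
    Matrix ((Fin dB × Fin dD) × (Fin dE × Fin dF)) (Fin dA × Fin dC) ℂ :=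
  Matrix.reindex (Equiv.prodProdProdComm (Fin dB) (Fin dE) (Fin dD) (Fin dF))
    (Equiv.refl _) (KA ⊗ₖ KC)

/-- `S(Φ(ρ))` has a nondegenerate local minimum at the pure state `|ψ⟩⟨ψ|`:
(i) it is a local minimum among density matrices, and (ii) for every unit vector `χ ⊥ ψ`
the second derivative of `t ↦ S(Φ(|ψ_t⟩⟨ψ_t|))` at `t = 0` is strictly positive. -/
def HasNondegLocalMinEnt {A B : Type*} [Fintype A] [Fintype B] [DecidableEq A]
    [DecidableEq B] (Φ : Matrix A A ℂ → Matrix B B ℂ) (ψ : A → ℂ) : Prop :=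
  (∃ ε > 0, ∀ ρ : Matrix A A ℂ, IsDensity ρ → ‖ρ - pureState ψ‖ < ε →
    entropy (Φ (pureState ψ)) ≤ entropy (Φ ρ)) ∧
  ∀ χ : A → ℂ, unitVec χ → (∑ i, (starRingEnd ℂ) (ψ i) * χ i = 0) →
    0 < iteratedDeriv 2 (fun t => entropy (Φ (pureState (psit ψ χ t)))) 0

/-- The relative entropy `H(ρ, ω) = Tr(ρ log ρ) − Tr(ρ log ω)`, with `Tr(ρ log ρ)`
computed via eigenvalues (convention `0·log 0 = 0`) and `log ω` the matrix logarithm. -/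
noncomputable def relEntropy {n : Type*} [Fintype n] [DecidableEq n]
    (ρ ω : Matrix n n ℂ) : ℝ :=
  -entropy ρ - (Matrix.trace (ρ * matLog ω)).re

/-- The Holevo capacity: the supremum over all finite ensembles `{(p_j, ψ_j)}` of
`χ(ℰ) = S(Φ(∑ p_j |ψ_j⟩⟨ψ_j|)) − ∑ p_j S(Φ(|ψ_j⟩⟨ψ_j|))`. -/
noncomputable def holevoCap {A B : Type*} [Fintype A] [Fintype B] [DecidableEq A]
    [DecidableEq B] (Φ : Matrix A A ℂ → Matrix B B ℂ) : ℝ :=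
  sSup {x : ℝ | ∃ (n : ℕ) (p : Fin n → ℝ) (ψ : Fin n → A → ℂ),
    (∀ j, 0 ≤ p j) ∧ (∑ j, p j) = 1 ∧ (∀ j, unitVec (ψ j)) ∧
    x = entropy (Φ (∑ j, (p j : ℂ) • pureState (ψ j))) -
      ∑ j, p j * entropy (Φ (pureState (ψ j)))}

/-- The supremum over unit vectors `Ψ` of `H(Φ(|Ψ⟩⟨Ψ|), σ)`. -/
noncomputable def supRelEnt {A B : Type*} [Fintype A] [Fintype B] [DecidableEq A]
    [DecidableEq B] (Φ : Matrix A A ℂ → Matrix B B ℂ) (σ : Matrix B B ℂ) : ℝ :=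
  sSup {x : ℝ | ∃ Ψ : A → ℂ, unitVec Ψ ∧ x = relEntropy (Φ (pureState Ψ)) σ}

/-!
If `C(Φ⊗Φ) > 2C(Φ)`, apply (i) to `γ = ρ_Av ⊗ ρ_Av`: its image `Φ(ρ_Av) ⊗ Φ(ρ_Av)` is positive
definite, so `C(Φ⊗Φ)` is bounded by the supremum of the relative entropies to it, one of which must
then exceed `2C(Φ)`. Conversely, if `(Φ⊗Φ)(Γ_Av) ≠ (Φ⊗Φ)(ρ_Av ⊗ ρ_Av)` then (ii) concludes directly;
otherwise (ii) says that `C(Φ⊗Φ)` is that very supremum, which dominates the given relative entropy.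
For this the supremum must be a genuine one rather than the junk value of `sSup`: relative entropies
`H(ρ, σ)` of density matrices `ρ` are bounded above in terms of `σ` alone, since `S(ρ) ≥ 0` and the
entries of a density matrix have modulus at most `1`.
-/

section PartialTrace

variable {B E : Type*} [Fintype E]

lemma ptrace_eq_sum_submatrix (M : Matrix (B × E) (B × E) ℂ) :
    ptrace M = ∑ e, M.submatrix (·, e) (·, e) := by
  ext b b'
  simp [ptrace, Matrix.sum_apply]

lemma posSemidef_ptrace {M : Matrix (B × E) (B × E) ℂ} (hM : M.PosSemidef) :
    (ptrace M).PosSemidef := by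
  rw [ptrace_eq_sum_submatrix]
  exact posSemidef_sum _ fun e _ => hM.submatrix _

lemma trace_ptrace [Fintype B] (M : Matrix (B × E) (B × E) ℂ) :
    (ptrace M).trace = M.trace := by
  simp [ptrace, Matrix.trace, Fintype.sum_prod_type]

lemma ptrace_reindex_kronecker {D F : Type*} [Fintype F] (M : Matrix (B × E) (B × E) ℂ)
    (N : Matrix (D × F) (D × F) ℂ) :
    ptrace (reindex (Equiv.prodProdProdComm B E D F) (Equiv.prodProdProdComm B E D F)
      (M ⊗ₖ N)) = ptrace M ⊗ₖ ptrace N := by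
  ext ⟨b, d⟩ ⟨b', d'⟩
  simp [ptrace, Fintype.sum_prod_type, Finset.sum_mul_sum]

end PartialTrace

lemma Matrix.PosSemidef.normSq_apply_le {n : Type*} [Fintype n] {A : Matrix n n ℂ}
    (hA : A.PosSemidef) (i j : n) :
    (Complex.normSq (A i j) : ℂ) ≤ A i i * A j j := by
  have h := (hA.submatrix ![i, j]).det_nonneg
  rw [det_fin_two] at h
  have hji : A j i = star (A i j) := (hA.1.apply j i).symm
  simp only [submatrix_apply, cons_val_zero, cons_val_one, hji, Complex.star_def,
    Complex.mul_conj] at h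
  exact sub_nonneg.mp h

section Density

variable {A : Type*} [Fintype A] [DecidableEq A]

lemma IsDensity.nonempty {ρ : Matrix A A ℂ} (hρ : IsDensity ρ) : Nonempty A := by
  by_contra h
  rw [not_nonempty_iff] at h
  simpa [Matrix.trace] using hρ.2

lemma isDensity_pureState {ψ : A → ℂ} (hψ : unitVec ψ) : IsDensity (pureState ψ) := by
  refine ⟨posSemidef_vecMulVec_self_star ψ, ?_⟩
  simp only [pureState, Matrix.trace, diag, vecMulVec_apply, Pi.star_apply, Complex.star_def,
    Complex.mul_conj]
  exact_mod_cast hψ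

lemma IsDensity.kronecker {C : Type*} [Fintype C] [DecidableEq C] {ρ : Matrix A A ℂ}
    {γ : Matrix C C ℂ} (hρ : IsDensity ρ) (hγ : IsDensity γ) : IsDensity (ρ ⊗ₖ γ) :=
  ⟨hρ.1.kronecker hγ.1, by rw [trace_kronecker, hρ.2, hγ.2, one_mul]⟩

lemma IsDensity.entropy_nonneg {ρ : Matrix A A ℂ} (hρ : IsDensity ρ) : 0 ≤ entropy ρ := by
  have hsum : ∑ i, hρ.1.1.eigenvalues i = 1 := by
    simpa using congrArg Complex.re (hρ.1.1.trace_eq_sum_eigenvalues.symm.trans hρ.2)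
  rw [entropy, dif_pos hρ.1.1, neg_nonneg]
  refine Finset.sum_nonpos fun i _ => mul_nonpos_of_nonneg_of_nonpos (hρ.1.eigenvalues_nonneg i)
    (Real.log_nonpos (hρ.1.eigenvalues_nonneg i) ?_)
  rw [← hsum]
  exact Finset.single_le_sum (fun j _ => hρ.1.eigenvalues_nonneg j) (Finset.mem_univ i)

lemma IsDensity.norm_apply_le_one {ρ : Matrix A A ℂ} (hρ : IsDensity ρ) (i j : A) :
    ‖ρ i j‖ ≤ 1 := by
  have hdiag : ∀ k, ρ k k ≤ 1 := fun k => by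
    rw [← hρ.2]
    exact Finset.single_le_sum (f := fun l => ρ l l) (fun l _ => hρ.1.diag_nonneg)
      (Finset.mem_univ k)
  have h : (Complex.normSq (ρ i j) : ℂ) ≤ 1 :=
    (hρ.1.normSq_apply_le i j).trans (mul_le_one₀ (hdiag i) hρ.1.diag_nonneg (hdiag j))
  rw [← Complex.sq_norm] at h
  exact pow_le_one_iff_of_nonneg (norm_nonneg _) two_ne_zero |>.mp (by exact_mod_cast h)

lemma relEntropy_le_of_isDensity {ρ : Matrix A A ℂ} (hρ : IsDensity ρ) (σ : Matrix A A ℂ) :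
    relEntropy ρ σ ≤ ∑ i, ∑ j, ‖matLog σ j i‖ := by
  have htrace : ‖(ρ * matLog σ).trace‖ ≤ ∑ i, ∑ j, ‖matLog σ j i‖ := by
    simp only [Matrix.trace, diag, mul_apply]
    refine (norm_sum_le _ _).trans <| Finset.sum_le_sum fun i _ =>
      (norm_sum_le _ _).trans <| Finset.sum_le_sum fun j _ => ?_
    rw [norm_mul]
    exact mul_le_of_le_one_left (norm_nonneg _) (hρ.norm_apply_le_one i j)
  have hre := (neg_le_abs _).trans (Complex.abs_re_le_norm (ρ * matLog σ).trace)
  rw [relEntropy]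
  linarith [hρ.entropy_nonneg]

end Density

section SupRelEnt

variable {A B : Type*} [Fintype A] [Fintype B] [DecidableEq A] [DecidableEq B]
  {Φ : Matrix A A ℂ → Matrix B B ℂ} {σ : Matrix B B ℂ}

lemma relEntropy_le_supRelEnt (hΦ : ∀ ψ, unitVec ψ → IsDensity (Φ (pureState ψ)))
    {Ψ : A → ℂ} (hΨ : unitVec Ψ) : relEntropy (Φ (pureState Ψ)) σ ≤ supRelEnt Φ σ := by
  refine le_csSup ⟨∑ i, ∑ j, ‖matLog σ j i‖, ?_⟩ ⟨Ψ, hΨ, rfl⟩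
  rintro _ ⟨ψ, hψ, rfl⟩
  exact relEntropy_le_of_isDensity (hΦ ψ hψ) σ

lemma exists_unitVec [Nonempty A] : ∃ ψ : A → ℂ, unitVec ψ :=
  ⟨Pi.single (Classical.arbitrary A) 1, by simp [unitVec, Pi.single_apply, apply_ite]⟩

lemma exists_lt_relEntropy_of_lt_supRelEnt [Nonempty A] {c : ℝ} (h : c < supRelEnt Φ σ) :
    ∃ Ψ, unitVec Ψ ∧ c < relEntropy (Φ (pureState Ψ)) σ := by
  obtain ⟨ψ, hψ⟩ := exists_unitVec (A := A)
  obtain ⟨_, ⟨Ψ, hΨ, rfl⟩, hlt⟩ :=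
    exists_lt_of_lt_csSup (by exact ⟨_, ψ, hψ, rfl⟩) h
  exact ⟨Ψ, hΨ, hlt⟩

end SupRelEnt

section Stinespring

lemma isDensity_stine {A B E : Type*} [Fintype A] [Fintype B] [Fintype E] [DecidableEq A]
    [DecidableEq B] {K : Matrix (B × E) A ℂ} (hK : Kᴴ * K = 1) {ρ : Matrix A A ℂ}
    (hρ : IsDensity ρ) : IsDensity (stine K ρ) :=
  ⟨posSemidef_ptrace (hρ.1.mul_mul_conjTranspose_same K),
    by rw [stine, trace_ptrace, trace_mul_cycle, hK, one_mul, hρ.2]⟩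

variable {dA dB dE dC dD dF : ℕ} (KA : Matrix (Fin dB × Fin dE) (Fin dA) ℂ)
  (KC : Matrix (Fin dD × Fin dF) (Fin dC) ℂ)

lemma prodK_conjTranspose_mul_self (hKA : KAᴴ * KA = 1) (hKC : KCᴴ * KC = 1) :
    (prodK KA KC)ᴴ * prodK KA KC = 1 := by
  rw [prodK, reindex_apply, conjTranspose_submatrix, Equiv.refl_symm, Equiv.coe_refl,
    submatrix_mul_equiv (e₂ := (Equiv.prodProdProdComm _ _ _ _).symm), conjTranspose_kronecker,
    ← mul_kronecker_mul, hKA, hKC, one_kronecker_one, submatrix_id_id]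

lemma stine_prodK_kronecker (ρ : Matrix (Fin dA) (Fin dA) ℂ) (γ : Matrix (Fin dC) (Fin dC) ℂ) :
    stine (prodK KA KC) (ρ ⊗ₖ γ) = stine KA ρ ⊗ₖ stine KC γ := by
  rw [stine, stine, stine, ← ptrace_reindex_kronecker, mul_kronecker_mul, mul_kronecker_mul,
    ← conjTranspose_kronecker, prodK, reindex_apply, reindex_apply, conjTranspose_submatrix]
  congr 1

end Stinespring

/-- Criterion for superadditivity of the Holevo capacity (Theorem `thm:super`):
`C(Φ⊗Φ) > 2C(Φ)` iff some unit vector `Ψ ∈ ℂ^d ⊗ ℂ^d` satisfies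
`H((Φ⊗Φ)(|Ψ⟩⟨Ψ|), (Φ⊗Φ)(ρ_Av ⊗ ρ_Av)) > 2C(Φ)`. -/
theorem holevo_superadditivity_criterion {d dE : ℕ}
    (K : Matrix (Fin d × Fin dE) (Fin d) ℂ) (hK : Kᴴ * K = 1)
    (ρAv : Matrix (Fin d) (Fin d) ℂ) (hρAv : IsDensity ρAv)
    (hρAvpos : (stine K ρAv).PosDef)
    (hi : ∀ γ : Matrix (Fin d × Fin d) (Fin d × Fin d) ℂ, IsDensity γ →
      (stine (prodK K K) γ).PosDef →
      holevoCap (stine (prodK K K)) ≤ supRelEnt (stine (prodK K K)) (stine (prodK K K) γ))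
    (hii : ∃ ΓAv : Matrix (Fin d × Fin d) (Fin d × Fin d) ℂ, IsDensity ΓAv ∧
      (stine (prodK K K) ΓAv).PosDef ∧
      holevoCap (stine (prodK K K)) =
        supRelEnt (stine (prodK K K)) (stine (prodK K K) ΓAv) ∧
      (stine (prodK K K) ΓAv ≠ stine (prodK K K) (ρAv ⊗ₖ ρAv) →
        2 * holevoCap (stine K) < holevoCap (stine (prodK K K)))) :
    2 * holevoCap (stine K) < holevoCap (stine (prodK K K)) ↔
      ∃ Ψ : Fin d × Fin d → ℂ, unitVec Ψ ∧
        2 * holevoCap (stine K) <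
          relEntropy (stine (prodK K K) (pureState Ψ))
            (stine (prodK K K) (ρAv ⊗ₖ ρAv)) := by
  have := hρAv.nonempty
  constructor
  · intro hsuper
    have hpos : (stine (prodK K K) (ρAv ⊗ₖ ρAv)).PosDef := by
      rw [stine_prodK_kronecker]
      exact hρAvpos.kronecker hρAvpos
    exact exists_lt_relEntropy_of_lt_supRelEnt
      (hsuper.trans_le (hi _ (hρAv.kronecker hρAv) hpos))
  · rintro ⟨Ψ, hΨ, hΨgt⟩
    obtain ⟨ΓAv, -, -, hcap, hsuper⟩ := hii
    by_cases hΓ : stine (prodK K K) ΓAv = stine (prodK K K) (ρAv ⊗ₖ ρAv)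
    · have hdens (ψ) (hψ : unitVec ψ) : IsDensity (stine (prodK K K) (pureState ψ)) :=
        isDensity_stine (prodK_conjTranspose_mul_self K K hK hK) (isDensity_pureState hψ)
      calc 2 * holevoCap (stine K) < _ := hΨgt
        _ ≤ supRelEnt (stine (prodK K K)) (stine (prodK K K) (ρAv ⊗ₖ ρAv)) :=
          relEntropy_le_supRelEnt hdens hΨ
        _ = holevoCap (stine (prodK K K)) := by rw [hcap, hΓ]
    · exact hsuper hΓ
end

section
/- Let 𝒦_B ⊆ M_{d_B}(ℂ) and 𝒦_C ⊆ M_{d_C}(ℂ) be complex subspaces. Let X_B ∈ 𝒦_B be positive definite Hermitian with Tr X_B² = 1 such that D₁[X_B, Y] = 0 for every Y ∈ 𝒦_B with Tr(X_B Yᴴ) = 0, and let X_C ∈ 𝒦_C be positive definite Hermitian with Tr X_C² = 1 such that D₁[X_C, Y] = 0 for every Y ∈ 𝒦_C with Tr(X_C Yᴴ) = 0. Then for every Y in the span of the Kronecker products {A ⊗ B : A ∈ 𝒦_B, B ∈ 𝒦_C} with Tr((X_B⊗X_C) Yᴴ) = 0, one has D₁[X_B⊗X_C, Y] = −Tr((Y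 (X_B⊗X_C) + (X_B⊗X_C) Yᴴ) · log(X_B²⊗X_C²)) = 0. -/
open Matrix
open scoped Kronecker ComplexOrder

attribute [local instance] Matrix.frobeniusNormedAddCommGroup Matrix.frobeniusNormedSpace

/-- First directional derivative `D₁[X,Y] = −Tr((Y Xᴴ + X Yᴴ) log(X Xᴴ))`. -/
noncomputable def D1 {n : Type*} [Fintype n] [DecidableEq n] (X Y : Matrix n n ℂ) : ℂ :=
  -Matrix.trace ((Y * Xᴴ + X * Yᴴ) * matLog (X * Xᴴ))

/-- Second directional derivative
`D₂[X,Y] = −2 Tr((Y Yᴴ − X Xᴴ) log(X Xᴴ))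
  − Tr((Y Xᴴ + X Yᴴ) ∫₀^∞ (X Xᴴ + u)⁻¹ (Y Xᴴ + X Yᴴ) (X Xᴴ + u)⁻¹ du)`. -/
noncomputable def D2 {n : Type*} [Fintype n] [DecidableEq n] (X Y : Matrix n n ℂ) : ℂ :=
  -2 * Matrix.trace ((Y * Yᴴ - X * Xᴴ) * matLog (X * Xᴴ)) -
    Matrix.trace ((Y * Xᴴ + X * Yᴴ) *
      matIntegral (fun u =>
        (X * Xᴴ + (u : ℂ) • 1)⁻¹ * (Y * Xᴴ + X * Yᴴ) * (X * Xᴴ + (u : ℂ) • 1)⁻¹))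


section AuxLemmas

open Polynomial

set_option linter.unusedSectionVars false

variable {n m : Type*} [Fintype n] [DecidableEq n] [Fintype m] [DecidableEq m]

lemma my_conj_pow (W Winv M : Matrix n n ℂ) (h2 : Winv * W = 1) (k : ℕ)
    (h1 : W * Winv = 1) : (W * M * Winv) ^ k = W * M ^ k * Winv := by
  induction k with
  | zero => simp [h1]
  | succ k ih =>
      rw [pow_succ, ih, pow_succ]
      calc W * M ^ k * Winv * (W * M * Winv) = W * M ^ k * (Winv * W) * M * Winv := by
            noncomm_ring
        _ = W * (M ^ k * M) * Winv := by rw [h2]; noncomm_ring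

lemma my_aeval_conj (W Winv M : Matrix n n ℂ) (h1 : W * Winv = 1) (h2 : Winv * W = 1)
    (q : ℂ[X]) : aeval (W * M * Winv) q = W * aeval M q * Winv := by
  rw [Polynomial.aeval_eq_sum_range, Polynomial.aeval_eq_sum_range, Finset.mul_sum,
    Finset.sum_mul]
  exact Finset.sum_congr rfl fun i _ => by
    rw [my_conj_pow W Winv M h2 i h1, mul_smul_comm, smul_mul_assoc]

lemma my_aeval_diagonal (c : n → ℂ) (q : ℂ[X]) :
    aeval (diagonal c) q = diagonal (fun i => aeval (c i) q) := by
  have h1 := Polynomial.aeval_algHom_apply (Matrix.diagonalAlgHom (n := n) ℂ) c q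
  simp only [diagonalAlgHom_apply] at h1
  have h2 : (aeval c) q = fun i => aeval (c i) q :=
    funext fun i => (Polynomial.aeval_algHom_apply (Pi.evalAlgHom ℂ (fun _ => ℂ) i) c q).symm
  rw [h1, h2]

lemma my_aeval_ofReal (p : ℝ[X]) (x : ℝ) :
    aeval (x : ℂ) (p.map (algebraMap ℝ ℂ)) = ((p.eval x : ℝ) : ℂ) := by
  rw [Polynomial.aeval_map_algebraMap]
  exact Polynomial.aeval_algebraMap_apply_eq_algebraMap_eval x p

lemma my_diag_conjT (f : n → ℝ) :
    (diagonal fun i => (f i : ℂ))ᴴ = diagonal fun i => (f i : ℂ) := by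
  have h : (star fun i => ((f i : ℂ))) = fun i => ((f i : ℂ)) :=
    funext fun i => Complex.conj_ofReal _
  rw [diagonal_conjTranspose, h]

lemma my_herm_conj (W D : Matrix n n ℂ) (hD : Dᴴ = D) : (W * D * Wᴴ)ᴴ = W * D * Wᴴ := by
  rw [conjTranspose_mul, conjTranspose_mul, conjTranspose_conjTranspose, hD, mul_assoc]

lemma my_isHermitian_conj_diag (W : Matrix n n ℂ) (d : n → ℝ) :
    (W * diagonal (fun i => (d i : ℂ)) * Wᴴ).IsHermitian :=
  my_herm_conj W _ (my_diag_conjT d)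

lemma matLog_conj (W : Matrix n n ℂ) (h1 : W * Wᴴ = 1) (h2 : Wᴴ * W = 1) (d : n → ℝ) :
    matLog (W * diagonal (fun i => (d i : ℂ)) * Wᴴ)
      = W * diagonal (fun i => (Real.log (d i) : ℂ)) * Wᴴ := by
  classical
  set A := W * diagonal (fun i => (d i : ℂ)) * Wᴴ with hAdef
  have hA : A.IsHermitian := my_isHermitian_conj_diag W d
  set u : Matrix n n ℂ := (hA.eigenvectorUnitary : Matrix n n ℂ) with hu
  have hu1 : u * uᴴ = 1 := by
    simpa [Matrix.star_eq_conjTranspose] using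
      (Matrix.mem_unitaryGroup_iff).mp hA.eigenvectorUnitary.2
  have hu2 : uᴴ * u = 1 := by
    simpa [Matrix.star_eq_conjTranspose] using
      (Matrix.mem_unitaryGroup_iff').mp hA.eigenvectorUnitary.2
  have hspec : A = u * diagonal (fun i => (hA.eigenvalues i : ℂ)) * uᴴ := hA.spectral_theorem
  set T : Finset ℝ := Finset.image d Finset.univ ∪ Finset.image hA.eigenvalues Finset.univ
    with hT
  set p : ℝ[X] := Lagrange.interpolate T id Real.log with hpdef
  have hp : ∀ x ∈ T, p.eval x = Real.log x := by
    intro x hx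
    exact Lagrange.eval_interpolate_at_node Real.log (Set.injOn_id _) hx
  set q := p.map (algebraMap ℝ ℂ) with hq
  have key : ∀ (V : Matrix n n ℂ), V * Vᴴ = 1 → Vᴴ * V = 1 → ∀ e : n → ℝ, (∀ i, e i ∈ T) →
      aeval (V * diagonal (fun i => (e i : ℂ)) * Vᴴ) q
        = V * diagonal (fun i => (Real.log (e i) : ℂ)) * Vᴴ := by
    intro V hV1 hV2 e he
    rw [my_aeval_conj _ _ _ hV1 hV2, my_aeval_diagonal]
    have : (fun i => aeval ((e i : ℂ)) q) = fun i => ((Real.log (e i) : ℝ) : ℂ) := by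
      funext i
      rw [hq, my_aeval_ofReal, hp _ (he i)]
    rw [this]
  have e1 := key W h1 h2 d (fun i => Finset.mem_union_left _
    (Finset.mem_image_of_mem d (Finset.mem_univ i)))
  have e2 := key u hu1 hu2 hA.eigenvalues (fun i => Finset.mem_union_right _
    (Finset.mem_image_of_mem hA.eigenvalues (Finset.mem_univ i)))
  rw [← hAdef] at e1
  rw [← hspec] at e2
  show matLog A = _
  rw [matLog, dif_pos hA, ← hu, ← e2, e1]
lemma my_kron_conjT (A : Matrix m m ℂ) (B : Matrix n n ℂ) : (A ⊗ₖ B)ᴴ = Aᴴ ⊗ₖ Bᴴ := by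
  ext ⟨i1, i2⟩ ⟨j1, j2⟩
  simp [conjTranspose_apply, kroneckerMap_apply, star_mul', mul_comm]

lemma my_kron_unitary1 (U : Matrix m m ℂ) (V : Matrix n n ℂ)
    (hU : U * Uᴴ = 1) (hV : V * Vᴴ = 1) : (U ⊗ₖ V) * (U ⊗ₖ V)ᴴ = 1 := by
  rw [my_kron_conjT, ← mul_kronecker_mul, hU, hV, one_kronecker_one]

lemma my_kron_diag_split (a : m → ℝ) (b : n → ℝ) :
    (diagonal fun ij : m × n => ((Real.log (a ij.1) + Real.log (b ij.2) : ℝ) : ℂ))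
      = (diagonal fun i => ((Real.log (a i) : ℝ) : ℂ)) ⊗ₖ (1 : Matrix n n ℂ)
        + (1 : Matrix m m ℂ) ⊗ₖ (diagonal fun j => ((Real.log (b j) : ℝ) : ℂ)) := by
  rw [← Matrix.diagonal_one, ← Matrix.diagonal_one, diagonal_kronecker_diagonal,
    diagonal_kronecker_diagonal]
  rw [diagonal_add]
  have : (fun ij : m × n => ((Real.log (a ij.1) : ℂ) * 1 + 1 * (Real.log (b ij.2) : ℂ)))
      = fun ij : m × n => ((Real.log (a ij.1) + Real.log (b ij.2) : ℝ) : ℂ) := by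
    funext ij
    push_cast
    ring
  rw [this]
lemma matLog_kron (U : Matrix m m ℂ) (V : Matrix n n ℂ)
    (hU1 : U * Uᴴ = 1) (hU2 : Uᴴ * U = 1) (hV1 : V * Vᴴ = 1) (hV2 : Vᴴ * V = 1)
    (a : m → ℝ) (b : n → ℝ) (ha : ∀ i, a i ≠ 0) (hb : ∀ j, b j ≠ 0) :
    matLog ((U * diagonal (fun i => (a i : ℂ)) * Uᴴ) ⊗ₖ (V * diagonal (fun j => (b j : ℂ)) * Vᴴ))
      = matLog (U * diagonal (fun i => (a i : ℂ)) * Uᴴ) ⊗ₖ (1 : Matrix n n ℂ)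
        + (1 : Matrix m m ℂ) ⊗ₖ matLog (V * diagonal (fun j => (b j : ℂ)) * Vᴴ) := by
  have hW1 := my_kron_unitary1 U V hU1 hV1
  have hW2 : (U ⊗ₖ V)ᴴ * (U ⊗ₖ V) = 1 := by
    rw [my_kron_conjT, ← mul_kronecker_mul, hU2, hV2, one_kronecker_one]
  have hkron : (U * diagonal (fun i => (a i : ℂ)) * Uᴴ) ⊗ₖ
        (V * diagonal (fun j => (b j : ℂ)) * Vᴴ)
      = (U ⊗ₖ V) * diagonal (fun ij : m × n => ((a ij.1 * b ij.2 : ℝ) : ℂ)) * (U ⊗ₖ V)ᴴ := by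
    rw [mul_kronecker_mul, mul_kronecker_mul, my_kron_conjT, diagonal_kronecker_diagonal]
    have : (fun ij : m × n => ((a ij.1 : ℂ) * (b ij.2 : ℂ)))
        = fun ij : m × n => ((a ij.1 * b ij.2 : ℝ) : ℂ) := by
      funext ij; push_cast; ring
    rw [this]
  rw [hkron, matLog_conj _ hW1 hW2]
  have hlog : (fun ij : m × n => ((Real.log (a ij.1 * b ij.2) : ℝ) : ℂ))
      = fun ij : m × n => ((Real.log (a ij.1) + Real.log (b ij.2) : ℝ) : ℂ) := by
    funext ij; rw [Real.log_mul (ha ij.1) (hb ij.2)]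
  rw [hlog, my_kron_diag_split, matLog_conj U hU1 hU2, matLog_conj V hV1 hV2]
  rw [mul_add, add_mul, my_kron_conjT]
  congr 1
  · rw [← mul_kronecker_mul, ← mul_kronecker_mul, mul_one, hV1]
  · rw [← mul_kronecker_mul, ← mul_kronecker_mul, mul_one, hU1]

lemma matLog_herm (M : Matrix n n ℂ) : (matLog M)ᴴ = matLog M := by
  unfold matLog
  split
  · exact my_herm_conj _ _ (my_diag_conjT _)
  · simp

lemma trace_sandwich (X Y L : Matrix n n ℂ) (hX : Xᴴ = X) (hL : Lᴴ = L) :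
    (X * Yᴴ * L).trace = star ((Y * X * L).trace) := by
  have h0 : (X * Yᴴ * L)ᴴ = L * (Y * X) := by
    rw [conjTranspose_mul, conjTranspose_mul, conjTranspose_conjTranspose, hX, hL]
  have h2 := Matrix.trace_conjTranspose (X * Yᴴ * L)
  rw [h0, Matrix.trace_mul_comm] at h2
  have h3 := congrArg star h2
  rw [star_star] at h3
  exact h3.symm

lemma D1_eq (X Y : Matrix n n ℂ) (hX : Xᴴ = X) :
    D1 X Y = -((Y * X * matLog (X * X)).trace + star ((Y * X * matLog (X * X)).trace)) := by
  rw [D1, hX, add_mul, trace_add, trace_sandwich X Y _ hX (matLog_herm _)]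

lemma crit_trace (𝒦 : Submodule ℂ (Matrix n n ℂ)) (X : Matrix n n ℂ)
    (hmem : X ∈ 𝒦) (hXh : Xᴴ = X) (h1 : (X * X).trace = 1)
    (hcrit : ∀ Y ∈ 𝒦, (X * Yᴴ).trace = 0 → D1 X Y = 0) :
    ∀ A ∈ 𝒦, (A * X * matLog (X * X)).trace
      = (X * X * matLog (X * X)).trace * (A * X).trace := by
  intro A hA
  set L := matLog (X * X) with hLdef
  set c := (A * X).trace with hc
  have hY0 : A - c • X ∈ 𝒦 := Submodule.sub_mem _ hA (Submodule.smul_mem _ _ hmem)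
  have hXA : (X * Aᴴ).trace = star c := by
    have h2 := Matrix.trace_conjTranspose (X * Aᴴ)
    rw [conjTranspose_mul, conjTranspose_conjTranspose, hXh] at h2
    have h3 := congrArg star h2
    rw [star_star] at h3
    exact h3.symm
  have htr : (X * (A - c • X)ᴴ).trace = 0 := by
    rw [conjTranspose_sub, conjTranspose_smul, mul_sub, Matrix.mul_smul, trace_sub,
      trace_smul, hXA, hXh, h1]
    simp
  have ht1' := hcrit _ hY0 htr
  have htr2 : (X * (Complex.I • (A - c • X))ᴴ).trace = 0 := by
    rw [conjTranspose_smul, Matrix.mul_smul, trace_smul, htr]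
    simp
  have ht2' := hcrit _ (Submodule.smul_mem _ Complex.I hY0) htr2
  rw [D1_eq X _ hXh] at ht1' ht2'
  set t := ((A - c • X) * X * L).trace with htdef
  have e1 : t + star t = 0 := neg_eq_zero.mp ht1'
  have hIt : ((Complex.I • (A - c • X)) * X * L).trace = Complex.I * t := by
    rw [smul_mul_assoc, smul_mul_assoc, trace_smul, smul_eq_mul]
  rw [hIt] at ht2'
  have e2 : Complex.I * t + star (Complex.I * t) = 0 := neg_eq_zero.mp ht2'
  have ht0 : t = 0 := by
    have hs : star (Complex.I * t) = -Complex.I * star t := by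
      rw [star_mul', Complex.star_def, Complex.conj_I]
    rw [hs] at e2
    have h3 : Complex.I * (t - star t) = 0 := by linear_combination e2
    rcases mul_eq_zero.mp h3 with h | h
    · exact absurd h Complex.I_ne_zero
    · have h4 : t = star t := sub_eq_zero.mp h
      rw [← h4] at e1
      exact add_self_eq_zero.mp e1
  have hexp : t = (A * X * L).trace - c * ((X * X) * L).trace := by
    simp only [htdef, sub_mul, smul_mul_assoc, trace_sub, trace_smul, smul_eq_mul]
  rw [ht0] at hexp
  linear_combination -hexp

lemma sq_decomp (X : Matrix n n ℂ) (hX : X.PosDef) :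
    ∃ (U : Matrix n n ℂ) (lam : n → ℝ), U * Uᴴ = 1 ∧ Uᴴ * U = 1 ∧ (∀ i, lam i ≠ 0) ∧
      X * X = U * diagonal (fun i => (lam i : ℂ)) * Uᴴ := by
  have hH : X.IsHermitian := hX.1
  refine ⟨(hH.eigenvectorUnitary : Matrix n n ℂ),
    fun i => hH.eigenvalues i * hH.eigenvalues i, ?_, ?_, ?_, ?_⟩
  · simpa [Matrix.star_eq_conjTranspose] using
      (Matrix.mem_unitaryGroup_iff).mp hH.eigenvectorUnitary.2
  · simpa [Matrix.star_eq_conjTranspose] using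
      (Matrix.mem_unitaryGroup_iff').mp hH.eigenvectorUnitary.2
  · intro i
    exact mul_ne_zero (hX.eigenvalues_pos i).ne' (hX.eigenvalues_pos i).ne'
  · set U : Matrix n n ℂ := (hH.eigenvectorUnitary : Matrix n n ℂ) with hU
    set D : Matrix n n ℂ := diagonal (fun i => (hH.eigenvalues i : ℂ)) with hD
    have hu2 : Uᴴ * U = 1 := by
      simpa [Matrix.star_eq_conjTranspose] using
        (Matrix.mem_unitaryGroup_iff').mp hH.eigenvectorUnitary.2
    have hspec : X = U * D * Uᴴ := hH.spectral_theorem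
    conv_lhs => rw [hspec]
    have e : (U * D * Uᴴ) * (U * D * Uᴴ) = U * D * (Uᴴ * U) * (D * Uᴴ) := by noncomm_ring
    have hfun : (fun i => (hH.eigenvalues i : ℂ) * (hH.eigenvalues i : ℂ))
        = fun i => ((hH.eigenvalues i * hH.eigenvalues i : ℝ) : ℂ) :=
      funext fun i => (Complex.ofReal_mul _ _).symm
    rw [e, hu2, mul_one, ← Matrix.mul_assoc, Matrix.mul_assoc U D D, hD,
      diagonal_mul_diagonal, hfun]

end AuxLemmas

/-- Vanishing of the first derivative at a product of critical points: if `X_B`, `X_C` are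
positive definite critical points on subspaces `𝒦_B`, `𝒦_C`, then every admissible
perturbation `Y` of `X_B ⊗ X_C` in `𝒦_B ⊗ 𝒦_C` has vanishing first derivative. -/
theorem D1_tensor_eq_zero {dB dC : ℕ}
    (𝒦B : Submodule ℂ (Matrix (Fin dB) (Fin dB) ℂ))
    (𝒦C : Submodule ℂ (Matrix (Fin dC) (Fin dC) ℂ))
    (XB : Matrix (Fin dB) (Fin dB) ℂ) (XC : Matrix (Fin dC) (Fin dC) ℂ)
    (hXBmem : XB ∈ 𝒦B) (hXCmem : XC ∈ 𝒦C)
    (hXB : XB.PosDef) (hXC : XC.PosDef)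
    (hXB1 : (XB * XB).trace = 1) (hXC1 : (XC * XC).trace = 1)
    (hcritB : ∀ Y ∈ 𝒦B, (XB * Yᴴ).trace = 0 → D1 XB Y = 0)
    (hcritC : ∀ Y ∈ 𝒦C, (XC * Yᴴ).trace = 0 → D1 XC Y = 0) :
    ∀ Y ∈ Submodule.span ℂ {M | ∃ A ∈ 𝒦B, ∃ B ∈ 𝒦C, M = A ⊗ₖ B},
      ((XB ⊗ₖ XC) * Yᴴ).trace = 0 →
      D1 (XB ⊗ₖ XC) Y =
          -Matrix.trace ((Y * (XB ⊗ₖ XC) + (XB ⊗ₖ XC) * Yᴴ) *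
            matLog ((XB * XB) ⊗ₖ (XC * XC))) ∧
      D1 (XB ⊗ₖ XC) Y = 0 := by
  obtain ⟨U, lamB, hU1, hU2, hlamB, hdecB⟩ := sq_decomp XB hXB
  obtain ⟨V, lamC, hV1, hV2, hlamC, hdecC⟩ := sq_decomp XC hXC
  set X := XB ⊗ₖ XC with hXdef
  have hXBh : XBᴴ = XB := hXB.1
  have hXCh : XCᴴ = XC := hXC.1
  have hXh : Xᴴ = X := by rw [hXdef, my_kron_conjT, hXBh, hXCh]
  have hXX : X * X = (XB * XB) ⊗ₖ (XC * XC) := (mul_kronecker_mul _ _ _ _).symm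
  set LB := matLog (XB * XB) with hLB
  set LC := matLog (XC * XC) with hLC
  set κB := ((XB * XB) * LB).trace with hκB
  set κC := ((XC * XC) * LC).trace with hκC
  have hL : matLog ((XB * XB) ⊗ₖ (XC * XC)) = LB ⊗ₖ 1 + 1 ⊗ₖ LC := by
    rw [hLB, hLC, hdecB, hdecC]
    exact matLog_kron U V hU1 hU2 hV1 hV2 lamB lamC hlamB hlamC
  have critB := crit_trace 𝒦B XB hXBmem hXBh hXB1 hcritB
  have critC := crit_trace 𝒦C XC hXCmem hXCh hXC1 hcritC
  have hψ : ∀ Y ∈ Submodule.span ℂ {M | ∃ A ∈ 𝒦B, ∃ B ∈ 𝒦C, M = A ⊗ₖ B},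
      (Y * X * matLog (X * X)).trace = (κB + κC) * (Y * X).trace := by
    intro Y hY
    induction hY using Submodule.span_induction with
    | mem M hM =>
        obtain ⟨A, hA, B, hB, rfl⟩ := hM
        rw [hXX, hL]
        have h1 : (A ⊗ₖ B) * X = (A * XB) ⊗ₖ (B * XC) := by
          rw [hXdef, ← mul_kronecker_mul]
        have h2 : ((A * XB) ⊗ₖ (B * XC)) * (LB ⊗ₖ 1) = ((A * XB) * LB) ⊗ₖ ((B * XC) * 1) :=
          (mul_kronecker_mul _ _ _ _).symm
        have h3 : ((A * XB) ⊗ₖ (B * XC)) * (1 ⊗ₖ LC) = ((A * XB) * 1) ⊗ₖ ((B * XC) * LC) :=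
          (mul_kronecker_mul _ _ _ _).symm
        rw [h1, mul_add, trace_add, h2, h3, mul_one, mul_one, trace_kronecker,
          trace_kronecker, trace_kronecker, critB A hA, critC B hB]
        ring
    | zero => simp
    | add x y hx hy ihx ihy =>
        rw [add_mul, add_mul, trace_add, trace_add, ihx, ihy]
        ring
    | smul c x hx ih =>
        rw [smul_mul_assoc, smul_mul_assoc, trace_smul, trace_smul, ih, smul_eq_mul,
          smul_eq_mul]
        ring
  intro Y hY hortho
  constructor
  · rw [D1, hXh, hXX]
  · have hYX0 : (Y * X).trace = 0 := by
      have h2 := Matrix.trace_conjTranspose (X * Yᴴ)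
      rw [conjTranspose_mul, conjTranspose_conjTranspose, hXh, hortho] at h2
      simpa using h2
    have ht : (Y * X * matLog (X * X)).trace = 0 := by rw [hψ Y hY, hYX0, mul_zero]
    rw [D1_eq X Y hXh, ht]
    simp
end

section
/- For all real numbers b > 0 and c > 0, one has 2 φ(b·c) ≤ φ(b) + φ(−b) + φ(c) + φ(−c). -/
/-!
Both `φ (exp (2x))` and `φ (exp x) + φ (-exp x)` equal `4 F x`, where `F x = x coth x`
(`mulCoth`); so with `b = exp (m + d)` and `c = exp (m - d)` the inequality is midpoint convexity
of `F`. As `F` is even we may take `m, d > 0`, and for `m ≠ d`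
`F (m + d) + F (m - d) - 2 F m = 2 sinh² d (F m - F d) / (sinh² m - sinh² d)`,
which is nonnegative because `F` and `sinh²` both increase on `(0, ∞)`.
-/

/-- `φ(a) = ((a+1)/(a−1))·log(a²)` for `a ≠ 1`, with `φ(1) = 4` (its limiting value). -/
noncomputable def phi (a : ℝ) : ℝ :=
  if a = 1 then 4 else ((a + 1) / (a - 1)) * Real.log (a ^ 2)

open Real Set

noncomputable def mulCoth (x : ℝ) : ℝ :=
  if x = 0 then 1 else x * cosh x / sinh x

lemma mulCoth_of_ne_zero {x : ℝ} (hx : x ≠ 0) : mulCoth x = x * cosh x / sinh x := if_neg hx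

@[simp]
lemma mulCoth_zero : mulCoth 0 = 1 := if_pos rfl

@[simp]
lemma mulCoth_neg (x : ℝ) : mulCoth (-x) = mulCoth x := by
  rcases eq_or_ne x 0 with rfl | hx
  · simp
  · rw [mulCoth_of_ne_zero hx, mulCoth_of_ne_zero (neg_ne_zero.mpr hx), cosh_neg, sinh_neg,
      neg_mul, neg_div_neg_eq]

lemma sinh_le_mul_cosh {x : ℝ} (hx : 0 ≤ x) : sinh x ≤ x * cosh x := by
  have hmono : MonotoneOn (fun y ↦ y * cosh y - sinh y) (Ici 0) := by
    refine monotoneOn_of_deriv_nonneg (convex_Ici 0) (by fun_prop) (by fun_prop) fun y hy ↦ ?_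
    rw [interior_Ici, mem_Ioi] at hy
    have hderiv : HasDerivAt (fun y ↦ y * cosh y - sinh y) (y * sinh y) y :=
      (((hasDerivAt_id' y).fun_mul (hasDerivAt_cosh y)).fun_sub (hasDerivAt_sinh y)).congr_deriv
        (by ring)
    rw [hderiv.deriv]
    exact mul_nonneg hy.le (sinh_nonneg_iff.mpr hy.le)
  simpa using hmono self_mem_Ici hx hx

lemma one_le_mulCoth (x : ℝ) : 1 ≤ mulCoth x := by
  wlog hx : 0 < x generalizing x
  · rcases (not_lt.mp hx).eq_or_lt with rfl | hx
    · simp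
    · simpa using this (-x) (neg_pos.mpr hx)
  rw [mulCoth_of_ne_zero hx.ne', le_div_iff₀ (sinh_pos_iff.mpr hx), one_mul]
  exact sinh_le_mul_cosh hx.le

lemma monotoneOn_mulCoth : MonotoneOn mulCoth (Ioi 0) := by
  have hmono : MonotoneOn (fun y ↦ y * cosh y / sinh y) (Ioi 0) := by
    refine monotoneOn_of_deriv_nonneg (convex_Ioi 0) ?_ ?_ fun y hy ↦ ?_
    · exact ContinuousOn.div (by fun_prop) (by fun_prop) fun y hy ↦ (sinh_pos_iff.mpr hy).ne'
    · rw [interior_Ioi]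
      exact DifferentiableOn.div (by fun_prop) (by fun_prop) fun y hy ↦ (sinh_pos_iff.mpr hy).ne'
    · rw [interior_Ioi, mem_Ioi] at hy
      have hs : sinh y ≠ 0 := (sinh_pos_iff.mpr hy).ne'
      have hderiv := ((hasDerivAt_id' y).fun_mul (hasDerivAt_cosh y)).fun_div (hasDerivAt_sinh y) hs
      rw [hderiv.deriv]
      refine div_nonneg ?_ (sq_nonneg _)
      have h2 : 2 * y ≤ sinh (2 * y) := self_le_sinh_iff.mpr (by positivity)
      nlinarith [sinh_two_mul y, cosh_sq_sub_sinh_sq y]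
  intro x hx y hy hxy
  simpa [mulCoth_of_ne_zero (ne_of_gt hx), mulCoth_of_ne_zero (ne_of_gt hy)] using hmono hx hy hxy

lemma sinh_add_mul_sinh_sub (x y : ℝ) :
    sinh (x + y) * sinh (x - y) = sinh x ^ 2 - sinh y ^ 2 := by
  rw [sinh_add, sinh_sub]
  linear_combination sinh x ^ 2 * cosh_sq_sub_sinh_sq y - sinh y ^ 2 * cosh_sq_sub_sinh_sq x

lemma mulCoth_add_add_mulCoth_sub_sub {m d : ℝ} (hm : m ≠ 0) (hd : d ≠ 0) (hp : m + d ≠ 0)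
    (hq : m - d ≠ 0) :
    mulCoth (m + d) + mulCoth (m - d) - 2 * mulCoth m =
      2 * sinh d ^ 2 * (mulCoth m - mulCoth d) / (sinh m ^ 2 - sinh d ^ 2) := by
  rw [mulCoth_of_ne_zero hm, mulCoth_of_ne_zero hd, mulCoth_of_ne_zero hp, mulCoth_of_ne_zero hq,
    ← sinh_add_mul_sinh_sub]
  field_simp
  rw [sinh_add, sinh_sub, cosh_add, cosh_sub]
  linear_combination (2 * m * cosh m * sinh d ^ 2 - 2 * d * cosh d * sinh m * sinh d) *
    cosh_sq_sub_sinh_sq m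

lemma mulCoth_two_mul_add_one (x : ℝ) : 2 * mulCoth x ≤ mulCoth (2 * x) + 1 := by
  wlog hx : 0 < x generalizing x
  · rcases (not_lt.mp hx).eq_or_lt with rfl | hx
    · norm_num
    · simpa using this (-x) (neg_pos.mpr hx)
  have hs := sinh_pos_iff.mpr hx
  have h2x : 2 * x ≤ sinh (2 * x) := self_le_sinh_iff.mpr (by positivity)
  rw [sinh_two_mul] at h2x
  rw [mulCoth_of_ne_zero hx.ne', mulCoth_of_ne_zero (by positivity), cosh_two_mul, sinh_two_mul,
    div_add_one (by positivity), mul_div_assoc', div_le_div_iff₀ hs (by positivity)]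
  have hid : x * sinh x * (cosh x ^ 2 - sinh x ^ 2) = x * sinh x := by
    rw [cosh_sq_sub_sinh_sq, mul_one]
  nlinarith [mul_nonneg hs.le (sub_nonneg.mpr h2x)]

lemma two_mulCoth_le_of_nonneg {m d : ℝ} (hm : 0 ≤ m) (hd : 0 ≤ d) :
    2 * mulCoth m ≤ mulCoth (m + d) + mulCoth (m - d) := by
  rcases hd.eq_or_lt with rfl | hd
  · simp [two_mul]
  rcases hm.eq_or_lt with rfl | hm
  · simp only [zero_add, zero_sub, mulCoth_neg, mulCoth_zero]
    linarith [one_le_mulCoth d]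
  rcases eq_or_ne m d with rfl | hmd
  · simpa [two_mul] using mulCoth_two_mul_add_one m
  rw [← sub_nonneg,
    mulCoth_add_add_mulCoth_sub_sub hm.ne' hd.ne' (by positivity) (sub_ne_zero.mpr hmd)]
  have hsq : MonotoneOn (fun x ↦ sinh x ^ 2) (Ioi 0) := fun x hx y hy hxy ↦
    pow_le_pow_left₀ (sinh_nonneg_iff.mpr (le_of_lt hx)) (sinh_le_sinh.mpr hxy) 2
  rcases hmd.lt_or_gt with hlt | hlt
  · exact div_nonneg_of_nonpos (mul_nonpos_of_nonneg_of_nonpos (by positivity)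
      (sub_nonpos.mpr (monotoneOn_mulCoth hm hd hlt.le))) (sub_nonpos.mpr (hsq hm hd hlt.le))
  · exact div_nonneg
      (mul_nonneg (by positivity) (sub_nonneg.mpr (monotoneOn_mulCoth hd hm hlt.le)))
      (sub_nonneg.mpr (hsq hd hm hlt.le))

lemma two_mulCoth_le (m d : ℝ) : 2 * mulCoth m ≤ mulCoth (m + d) + mulCoth (m - d) := by
  wlog hd : 0 ≤ d generalizing d
  · simpa [← sub_eq_add_neg, add_comm] using this (-d) (by linarith)
  wlog hm : 0 ≤ m generalizing m
  · have h := this (-m) (by linarith)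
    rwa [mulCoth_neg, show -m + d = -(m - d) by ring, show -m - d = -(m + d) by ring, mulCoth_neg,
      mulCoth_neg, add_comm] at h
  exact two_mulCoth_le_of_nonneg hm hd

lemma cosh_div_sinh_eq (x : ℝ) : cosh x / sinh x = (exp (2 * x) + 1) / (exp (2 * x) - 1) := by
  rw [cosh_eq, sinh_eq, exp_neg, two_mul, exp_add]
  field_simp

lemma phi_add_phi_neg {a : ℝ} (ha : a ^ 2 ≠ 1) :
    phi a + phi (-a) = 2 * ((a ^ 2 + 1) / (a ^ 2 - 1)) * log (a ^ 2) := by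
  have h1 : a ≠ 1 := by rintro rfl; simp at ha
  have h2 : -a ≠ 1 := by rintro h; rw [← neg_neg a, h] at ha; simp at ha
  rw [phi, phi, if_neg h1, if_neg h2, neg_sq]
  field_simp
  ring

lemma phi_exp_two_mul (x : ℝ) : phi (exp (2 * x)) = 4 * mulCoth x := by
  rcases eq_or_ne x 0 with rfl | hx
  · simp [phi]
  have h : exp (2 * x) ≠ 1 := by simpa using hx
  rw [phi, if_neg h, ← cosh_div_sinh_eq, ← exp_nat_mul, log_exp, mulCoth_of_ne_zero hx]
  push_cast
  ring

lemma phi_exp_add_phi_neg_exp (x : ℝ) : phi (exp x) + phi (-exp x) = 4 * mulCoth x := by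
  rcases eq_or_ne x 0 with rfl | hx
  · norm_num [phi]
  have h : exp x ^ 2 = exp (2 * x) := by rw [← exp_nat_mul]; norm_num
  rw [phi_add_phi_neg (by rw [h]; simpa using hx), h, ← cosh_div_sinh_eq, log_exp,
    mulCoth_of_ne_zero hx]
  ring

/-- For all real numbers `b > 0` and `c > 0`,
`2 φ(b·c) ≤ φ(b) + φ(−b) + φ(c) + φ(−c)`. -/
theorem two_phi_mul_le (b c : ℝ) (hb : 0 < b) (hc : 0 < c) :
    2 * phi (b * c) ≤ phi b + phi (-b) + phi c + phi (-c) := by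
  set m := (log b + log c) / 2
  set d := (log b - log c) / 2
  have hb' : b = exp (m + d) := by rw [show m + d = log b by ring, exp_log hb]
  have hc' : c = exp (m - d) := by rw [show m - d = log c by ring, exp_log hc]
  have hbc : b * c = exp (2 * m) := by rw [hb', hc', ← exp_add]; ring_nf
  rw [hbc, phi_exp_two_mul, hb', hc', add_assoc _ (phi (exp (m - d))), phi_exp_add_phi_neg_exp,
    phi_exp_add_phi_neg_exp]
  linarith [two_mulCoth_le m d]
end

section
/- For every real number a > 0, one has φ(a) ≥ 4 and φ(a) = φ(a⁻¹). -/
/-!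
Because `φ(a⁻¹) = φ(a)`, it suffices to treat `a ≥ 1`. There `φ(a) ≥ 4` amounts to
`log a ≥ 2(a - 1)/(a + 1)`, the first term of the series
`log a = 2 ∑ t^(2k+1)/(2k+1)` with `t = (a - 1)/(a + 1) ≥ 0`.
-/

open Real

lemma two_mul_sub_one_div_add_one_le_log {x : ℝ} (hx : 1 ≤ x) :
    2 * (x - 1) / (x + 1) ≤ log x := by
  have hx₀ : 0 ≤ x - 1 := sub_nonneg.2 hx
  have h := le_hasSum (hasSum_log_one_add hx₀) 0 fun k _ => by positivity
  rw [add_sub_cancel] at h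
  refine le_of_eq_of_le ?_ h
  norm_num
  ring

lemma phi_inv (a : ℝ) : phi a⁻¹ = phi a := by
  rcases eq_or_ne a 0 with rfl | ha₀
  · rw [inv_zero]
  rcases eq_or_ne a 1 with rfl | ha₁
  · rw [inv_one]
  have ha₁' : a⁻¹ ≠ 1 := inv_ne_one.2 ha₁
  rw [phi, phi, if_neg ha₁, if_neg ha₁', inv_pow, log_inv]
  field_simp
  ring

lemma four_le_phi_of_one_le {a : ℝ} (ha : 1 ≤ a) : 4 ≤ phi a := by
  rcases ha.eq_or_lt with rfl | ha₁
  · simp [phi]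
  have hsub : 0 < a - 1 := sub_pos.2 ha₁
  rw [phi, if_neg ha₁.ne', log_pow, Nat.cast_ofNat]
  calc (4 : ℝ) = (a + 1) / (a - 1) * (2 * (2 * (a - 1) / (a + 1))) := by field_simp; ring
    _ ≤ (a + 1) / (a - 1) * (2 * log a) := by
      gcongr
      exact two_mul_sub_one_div_add_one_le_log ha

/-- For every real number `a > 0`, `φ(a) ≥ 4` and `φ(a) = φ(a⁻¹)`. -/
theorem four_le_phi_and_phi_inv (a : ℝ) (ha : 0 < a) : 4 ≤ phi a ∧ phi a = phi a⁻¹ := by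
  refine ⟨?_, (phi_inv a).symm⟩
  rcases le_total 1 a with h | h
  · exact four_le_phi_of_one_le h
  · rw [← phi_inv]
    exact four_le_phi_of_one_le (one_le_inv₀ ha |>.2 h)
end

section
/- The function ζ(x) = (x · log x)/(x² − 1) is strictly decreasing on the interval (1, ∞). -/
/-!
The derivative of `x log x / (x² − 1)` has numerator `x² − 1 − (x² + 1) log x`, so it suffices that
`log x > (x² − 1)/(x² + 1)` for `x > 1`. This is the classical bound `log y > 2(y − 1)/(y + 1)` at
`y = x²`, which in turn is the first term of the all-positive series
`log y = 2 ∑ u^(2k+1)/(2k+1)` with `u = (y − 1)/(y + 1)`.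
-/

open Real Set

namespace Real

theorem two_mul_sub_one_div_add_one_lt_log {y : ℝ} (hy : 1 < y) :
    2 * (y - 1) / (y + 1) < log y := by
  have hy₁ : 0 < y - 1 := sub_pos.mpr hy
  have hu : 1 / (2 * (y - 1)⁻¹ + 1) = (y - 1) / (y + 1) := by
    field_simp
    ring
  have hsum := hasSum_log_one_add_inv (inv_pos.mpr hy₁)
  rw [inv_inv, add_sub_cancel, hu] at hsum
  simpa [mul_div_assoc] using
    lt_hasSum hsum 0 (fun k _ ↦ by positivity) 1 one_ne_zero (by positivity)

theorem sq_sub_one_lt_mul_log {x : ℝ} (hx : 1 < x) : x ^ 2 - 1 < (x ^ 2 + 1) * log x := by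
  have hlog := two_mul_sub_one_div_add_one_lt_log (one_lt_pow₀ hx two_ne_zero)
  rw [log_pow, Nat.cast_ofNat, div_lt_iff₀ (by positivity)] at hlog
  linarith

theorem hasDerivAt_mul_log_div_sq_sub_one {x : ℝ} (hx₀ : x ≠ 0) (hx : x ^ 2 - 1 ≠ 0) :
    HasDerivAt (fun x ↦ x * log x / (x ^ 2 - 1))
      ((x ^ 2 - 1 - (x ^ 2 + 1) * log x) / (x ^ 2 - 1) ^ 2) x := by
  have hden : HasDerivAt (fun x : ℝ ↦ x ^ 2 - 1) (2 * x) x := by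
    simpa using (hasDerivAt_pow 2 x).sub_const 1
  exact ((hasDerivAt_mul_log hx₀).div hden hx).congr_deriv (by ring)

end Real

/-- The function `ζ(x) = x·log x / (x² − 1)` is strictly decreasing on `(1, ∞)`. -/
theorem zeta_strictAntiOn :
    StrictAntiOn (fun x : ℝ => x * Real.log x / (x ^ 2 - 1)) (Set.Ioi 1) := by
  have hderiv : ∀ x ∈ Ioi (1 : ℝ), HasDerivAt (fun x ↦ x * log x / (x ^ 2 - 1))
      ((x ^ 2 - 1 - (x ^ 2 + 1) * log x) / (x ^ 2 - 1) ^ 2) x := fun x (hx : 1 < x) ↦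
    hasDerivAt_mul_log_div_sq_sub_one (zero_lt_one.trans hx).ne'
      (sub_pos.mpr (one_lt_pow₀ hx two_ne_zero)).ne'
  refine strictAntiOn_of_hasDerivWithinAt_neg (convex_Ioi 1)
    (fun x hx ↦ (hderiv x hx).continuousAt.continuousWithinAt)
    (fun x hx ↦ (hderiv x (interior_subset hx)).hasDerivWithinAt) fun x hx ↦ ?_
  rw [interior_Ioi] at hx
  exact div_neg_of_neg_of_pos (sub_neg.mpr (sq_sub_one_lt_mul_log hx))
    (pow_pos (sub_pos.mpr (one_lt_pow₀ hx two_ne_zero)) 2)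
end

section
/- Let ρ : ℝ → M_d(ℂ) be differentiable on a neighborhood of t₁, with ρ(t) Hermitian and positive definite for all t in that neighborhood. Then the map t ↦ log ρ(t) is differentiable at t₁ with derivative ∫₀^∞ (ρ(t₁) + u·I)⁻¹ ρ'(t₁) (ρ(t₁) + u·I)⁻¹ du, where the integral is a Bochner integral of a matrix-valued function on (0,∞). -/
/-!
For `r > 0`, `log r = ∫₀^∞ ((1 + u)⁻¹ - (r + u)⁻¹) du`. Applied to the eigenvalues through
the functional calculus, this gives `log A = ∫₀^∞ ((1 + u)⁻¹ - (A + u)⁻¹) du` for positive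
definite `A`, so it suffices to differentiate the integrand and to dominate its difference
quotients. The resolvent identity `(A + u)⁻¹ - (B + u)⁻¹ = (A + u)⁻¹ (B - A) (B + u)⁻¹` does
both: it gives the derivative `X ↦ (A + u)⁻¹ X (A + u)⁻¹`, and once
`‖(A + u)⁻¹‖ ‖B - A‖ ≤ 1/2` it gives `‖(B + u)⁻¹‖ ≤ 2 ‖(A + u)⁻¹‖`, hence a Lipschitz bound
`O((c + u)⁻²) ‖B - A‖`, with `c` the least eigenvalue of `A`, integrable on `(0, ∞)`.
-/

open Matrix
open scoped Kronecker ComplexOrder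

attribute [local instance] Matrix.frobeniusNormedAddCommGroup Matrix.frobeniusNormedSpace

attribute [local instance] Matrix.frobeniusNormedRing Matrix.frobeniusNormedAlgebra

-- The Frobenius norm induces the product topology of `Matrix` only up to unfolding, which
-- instance search does not see; this supplies the `ENorm` structure needed by `Integrable`.
noncomputable instance {n : Type*} [Fintype n] : ESeminormedAddCommMonoid (Matrix n n ℂ) :=
  NormedAddCommGroup.toENormedAddCommMonoid.toESeminormedAddCommMonoid

open Set MeasureTheory Filter Topology

theorem integrableOn_Ioi_inv_add_sq {a : ℝ} (ha : 0 < a) :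
    IntegrableOn (fun u : ℝ => ((a + u) ^ 2)⁻¹) (Ioi 0) := by
  have hderiv : ∀ u ∈ Ici (0 : ℝ), HasDerivAt (fun u => -(a + u)⁻¹) ((a + u) ^ 2)⁻¹ u :=
    fun u hu => by
      have : a + u ≠ 0 := by have : (0 : ℝ) ≤ u := hu; positivity
      simpa [neg_div] using (((hasDerivAt_id' u).const_add a).fun_inv this).fun_neg
  refine integrableOn_Ioi_deriv_of_nonneg (hderiv 0 self_mem_Ici).continuousAt.continuousWithinAt
    (fun u hu => hderiv u (Ioi_subset_Ici_self hu)) (fun u _ => by positivity) (l := 0) ?_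
  simpa using (tendsto_inv_atTop_zero.comp (tendsto_atTop_add_const_left _ a tendsto_id)).neg

theorem integrableOn_Ioi_inv_one_add_sub_inv_add {r : ℝ} (hr : 0 < r) :
    IntegrableOn (fun u : ℝ => (1 + u)⁻¹ - (r + u)⁻¹) (Ioi 0) := by
  set a := min 1 r
  have ha : 0 < a := lt_min one_pos hr
  refine ((integrableOn_Ioi_inv_add_sq ha).const_mul |r - 1|).mono' ?_ ?_
  · have hcont : ∀ b : ℝ, 0 < b → ContinuousOn (fun u : ℝ => (b + u)⁻¹) (Ioi 0) :=
      fun b hb => (continuousOn_const.add continuousOn_id).inv₀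
        fun u (hu : 0 < u) => (add_pos hb hu).ne'
    exact ((hcont 1 one_pos).sub (hcont r hr)).aestronglyMeasurable measurableSet_Ioi
  · refine ae_restrict_of_forall_mem measurableSet_Ioi fun u (hu : 0 < u) => ?_
    have h1 : a + u ≤ 1 + u := by gcongr; exact min_le_left _ _
    have h2 : a + u ≤ r + u := by gcongr; exact min_le_right _ _
    rw [inv_sub_inv (by positivity) (by positivity), Real.norm_eq_abs, abs_div,
      abs_of_pos (by positivity : 0 < (1 + u) * (r + u)), div_eq_mul_inv, sq,
      add_sub_add_right_eq_sub]
    gcongr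

theorem integral_Ioi_inv_one_add_sub_inv_add {r : ℝ} (hr : 0 < r) :
    ∫ u in Ioi (0 : ℝ), ((1 + u)⁻¹ - (r + u)⁻¹) = Real.log r := by
  have hderiv : ∀ u ∈ Ici (0 : ℝ),
      HasDerivAt (fun u => Real.log (1 + u) - Real.log (r + u)) ((1 + u)⁻¹ - (r + u)⁻¹) u :=
    fun u (hu : 0 ≤ u) => by
      simpa using (((hasDerivAt_id' u).const_add 1).log (by positivity)).fun_sub
        (((hasDerivAt_id' u).const_add r).log (by positivity))
  have hlim : Tendsto (fun u => Real.log (1 + u) - Real.log (r + u)) atTop (𝓝 0) := by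
    simpa [add_comm] using
      (Real.tendsto_log_comp_add_sub_log 1).sub (Real.tendsto_log_comp_add_sub_log r)
  rw [integral_Ioi_of_hasDerivAt_of_tendsto
    (hderiv 0 self_mem_Ici).continuousAt.continuousWithinAt
    (fun u hu => hderiv u (Ioi_subset_Ici_self hu)) (integrableOn_Ioi_inv_one_add_sub_inv_add hr)
    hlim]
  simp

open scoped Ring in
theorem norm_inverse_sub_inverse_le {R : Type*} [NormedRing R] {a b : R} (ha : IsUnit a)
    (hb : IsUnit b) (h : ‖a⁻¹ʳ‖ * ‖b - a‖ ≤ 1 / 2) :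
    ‖a⁻¹ʳ - b⁻¹ʳ‖ ≤ 2 * ‖a⁻¹ʳ‖ ^ 2 * ‖b - a‖ := by
  have hsub : ‖a⁻¹ʳ - b⁻¹ʳ‖ ≤ ‖a⁻¹ʳ‖ * ‖b - a‖ * ‖b⁻¹ʳ‖ :=
    Ring.inverse_sub_inverse (iff_of_true ha hb) ▸ norm_mul₃_le
  -- `b⁻¹ = a⁻¹ - (a⁻¹ - b⁻¹)`, so `‖b⁻¹‖ ≤ ‖a⁻¹‖ + ‖b⁻¹‖ / 2`.
  have hb_le : ‖b⁻¹ʳ‖ ≤ 2 * ‖a⁻¹ʳ‖ := by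
    have := norm_sub_le a⁻¹ʳ (a⁻¹ʳ - b⁻¹ʳ)
    rw [sub_sub_cancel] at this
    nlinarith [mul_le_mul_of_nonneg_right h (norm_nonneg b⁻¹ʳ)]
  calc ‖a⁻¹ʳ - b⁻¹ʳ‖ ≤ ‖a⁻¹ʳ‖ * ‖b - a‖ * ‖b⁻¹ʳ‖ := hsub
    _ ≤ ‖a⁻¹ʳ‖ * ‖b - a‖ * (2 * ‖a⁻¹ʳ‖) := by gcongr
    _ = 2 * ‖a⁻¹ʳ‖ ^ 2 * ‖b - a‖ := by ring

open scoped Ring in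
theorem HasDerivAt.ringInverse {𝕜 R : Type*} [NontriviallyNormedField 𝕜] [NormedRing R]
    [HasSummableGeomSeries R] [NormedAlgebra 𝕜 R] {f : 𝕜 → R} {f' : R} {x : 𝕜}
    (hf : HasDerivAt f f' x) (hx : IsUnit (f x)) :
    HasDerivAt (fun t => (f t)⁻¹ʳ) (-((f x)⁻¹ʳ * f' * (f x)⁻¹ʳ)) x := by
  obtain ⟨u, hu⟩ := hx
  have := (hasFDerivAt_ringInverse (𝕜 := 𝕜) u).comp_hasDerivAt_of_eq x hf hu
  simpa [← hu, Function.comp_def] using this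

theorem hasDerivAt_integral_of_dominated_loc_of_lip' {α 𝕜 E : Type*} [MeasurableSpace α]
    {μ : Measure α} [RCLike 𝕜] [NormedAddCommGroup E] [NormedSpace ℝ E] [NormedSpace 𝕜 E]
    {F : 𝕜 → α → E} {F' : α → E} {x₀ : 𝕜} {s : Set 𝕜} {bound : α → ℝ} (hs : s ∈ 𝓝 x₀)
    (hF_meas : ∀ x ∈ s, AEStronglyMeasurable (F x) μ) (hF_int : Integrable (F x₀) μ)
    (hF'_meas : AEStronglyMeasurable F' μ)
    (h_lipsch : ∀ᵐ a ∂μ, ∀ x ∈ s, ‖F x a - F x₀ a‖ ≤ bound a * ‖x - x₀‖)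
    (bound_integrable : Integrable bound μ) (h_diff : ∀ᵐ a ∂μ, HasDerivAt (F · a) (F' a) x₀) :
    Integrable F' μ ∧ HasDerivAt (fun x ↦ ∫ a, F x a ∂μ) (∫ a, F' a ∂μ) x₀ := by
  set L : E →L[𝕜] 𝕜 →L[𝕜] E := ContinuousLinearMap.smulRightL 𝕜 𝕜 E 1
  have hm : AEStronglyMeasurable (L ∘ F') μ := L.continuous.comp_aestronglyMeasurable hF'_meas
  obtain ⟨hF'_int, key⟩ := hasFDerivAt_integral_of_dominated_loc_of_lip' hs hF_meas hF_int hm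
    h_lipsch bound_integrable (h_diff.mono fun _ ha ↦ ha.hasFDerivAt)
  replace hF'_int : Integrable F' μ := by
    rw [← integrable_norm_iff hm] at hF'_int
    simpa [L, (· ∘ ·), integrable_norm_iff hF'_meas] using! hF'_int
  refine ⟨hF'_int, ?_⟩
  by_cases hE : CompleteSpace E; swap
  · simpa [integral, hE] using! hasDerivAt_const x₀ 0
  rw [hasDerivAt_iff_hasFDerivAt]
  simpa only [(· ∘ ·), ContinuousLinearMap.integral_comp_comm _ hF'_int] using! key

namespace Matrix

theorem PosDef.add_smul_one {n : Type*} [DecidableEq n] {A : Matrix n n ℂ} (hA : A.PosDef)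
    {u : ℝ} (hu : 0 ≤ u) : (A + (u : ℂ) • 1).PosDef :=
  hA.add_posSemidef (PosSemidef.one.smul (by exact_mod_cast hu))

variable {n : Type*} [Fintype n] [DecidableEq n] {A : Matrix n n ℂ}

theorem IsHermitian.exists_cfc_eq_sum_smul (hA : A.IsHermitian) :
    ∃ P : n → Matrix n n ℂ, ∀ f : ℝ → ℝ, cfc f A = ∑ k, (f (hA.eigenvalues k) : ℂ) • P k := by
  set U : Matrix n n ℂ := (hA.eigenvectorUnitary : Matrix n n ℂ)
  refine ⟨fun k => U * single k k 1 * star U, fun f => ?_⟩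
  rw [hA.cfc_eq, IsHermitian.cfc, Unitary.conjStarAlgAut_apply, ← sum_single_eq_diagonal,
    Finset.mul_sum, Finset.sum_mul]
  refine Finset.sum_congr rfl fun k _ => ?_
  have hsingle :
      single k k (f (hA.eigenvalues k) : ℂ) = (f (hA.eigenvalues k) : ℂ) • single k k 1 := by
    rw [smul_single, smul_eq_mul, mul_one]
  change U * single k k (f (hA.eigenvalues k) : ℂ) * star U = _
  rw [hsingle, mul_smul_comm, smul_mul_assoc]

theorem _root_.matLog_eq_cfc (hA : A.IsHermitian) : matLog A = cfc Real.log A := by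
  rw [hA.cfc_eq, IsHermitian.cfc, matLog, dif_pos hA, Unitary.conjStarAlgAut_apply]
  rfl

theorem IsHermitian.exists_norm_cfc_le (hA : A.IsHermitian) :
    ∃ M ≥ 0, ∀ (f : ℝ → ℝ) (c : ℝ), (∀ k, |f (hA.eigenvalues k)| ≤ c) → ‖cfc f A‖ ≤ M * c := by
  obtain ⟨P, hP⟩ := hA.exists_cfc_eq_sum_smul
  refine ⟨∑ k, ‖P k‖, by positivity, fun f c hf => ?_⟩
  calc ‖cfc f A‖ ≤ ∑ k, ‖(f (hA.eigenvalues k) : ℂ) • P k‖ := hP f ▸ norm_sum_le _ _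
    _ ≤ ∑ k, ‖P k‖ * c := Finset.sum_le_sum fun k _ => by
        rw [norm_smul, Complex.norm_real, Real.norm_eq_abs, mul_comm]
        gcongr
        exact hf k
    _ = _ := (Finset.sum_mul ..).symm

variable {X : Type*} [MeasurableSpace X] {μ : Measure X}

theorem IsHermitian.integrable_cfc (hA : A.IsHermitian) {f : X → ℝ → ℝ}
    (hf : ∀ k, Integrable (fun x => f x (hA.eigenvalues k)) μ) :
    Integrable (fun x => cfc (f x) A) μ := by
  obtain ⟨P, hP⟩ := hA.exists_cfc_eq_sum_smul
  simp only [hP]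
  exact integrable_finsetSum _ fun k _ => (hf k).ofReal.smul_const _

theorem IsHermitian.integral_cfc (hA : A.IsHermitian) {f : X → ℝ → ℝ}
    (hf : ∀ k, Integrable (fun x => f x (hA.eigenvalues k)) μ) :
    ∫ x, cfc (f x) A ∂μ = cfc (fun r => ∫ x, f x r ∂μ) A := by
  obtain ⟨P, hP⟩ := hA.exists_cfc_eq_sum_smul
  simp only [hP]
  rw [integral_finsetSum Finset.univ (f := fun k x => (f x (hA.eigenvalues k) : ℂ) • P k)
    fun k _ => (hf k).ofReal.smul_const _]
  refine Finset.sum_congr rfl fun k _ => ?_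
  rw [integral_smul_const]
  congr 1
  exact integral_ofReal

theorem IsHermitian.aestronglyMeasurable_cfc (hA : A.IsHermitian) {f : X → ℝ → ℝ}
    (hf : ∀ k, Measurable (fun x => f x (hA.eigenvalues k))) :
    AEStronglyMeasurable (fun x => cfc (f x) A) μ := by
  obtain ⟨P, hP⟩ := hA.exists_cfc_eq_sum_smul
  simp only [hP]
  exact Finset.aestronglyMeasurable_fun_sum _ fun k _ =>
    (Complex.measurable_ofReal.comp (hf k)).aestronglyMeasurable.smul_const _

theorem PosDef.pos_of_mem_spectrum (hA : A.PosDef) {r : ℝ} (hr : r ∈ spectrum ℝ A) : 0 < r := by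
  obtain ⟨k, rfl⟩ := hA.1.spectrum_real_eq_range_eigenvalues ▸ hr
  exact hA.eigenvalues_pos k

theorem PosDef.cfc_inv_add (hA : A.PosDef) {u : ℝ} (hu : 0 ≤ u) :
    cfc (fun r : ℝ => (r + u)⁻¹) A = (A + (u : ℂ) • 1)⁻¹ := by
  have hsa : IsSelfAdjoint A := hA.1
  rw [cfc_inv (fun r : ℝ => r + u) A, cfc_add_const u (fun r => r) A, cfc_id' ℝ A,
    nonsing_inv_eq_ringInverse, Algebra.algebraMap_eq_smul_one, ← Complex.coe_smul]
  exact fun r hr => (add_pos_of_pos_of_nonneg (hA.pos_of_mem_spectrum hr) hu).ne'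

theorem PosDef.exists_pos_le_eigenvalues (hA : A.PosDef) :
    ∃ c > 0, ∀ k, c ≤ hA.1.eigenvalues k := by
  cases isEmpty_or_nonempty n
  · exact ⟨1, one_pos, fun k => isEmptyElim k⟩
  · obtain ⟨k₀, hk₀⟩ := Finite.exists_min hA.1.eigenvalues
    exact ⟨_, hA.eigenvalues_pos k₀, hk₀⟩

theorem PosDef.exists_norm_inv_add_le (hA : A.PosDef) :
    ∃ M ≥ 0, ∃ c > 0, ∀ u : ℝ, 0 ≤ u → ‖(A + (u : ℂ) • 1)⁻¹‖ ≤ M * (c + u)⁻¹ := by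
  obtain ⟨M, hM0, hM⟩ := hA.1.exists_norm_cfc_le
  obtain ⟨c, hc, hc_le⟩ := hA.exists_pos_le_eigenvalues
  refine ⟨M, hM0, c, hc, fun u hu => hA.cfc_inv_add hu ▸ hM _ _ fun k => ?_⟩
  rw [abs_of_pos (by have := hA.eigenvalues_pos k; positivity)]
  gcongr
  exact hc_le k

end Matrix

noncomputable def matLogIntegrand {n : Type*} [Fintype n] [DecidableEq n] (A : Matrix n n ℂ)
    (u : ℝ) : Matrix n n ℂ :=
  (1 + u)⁻¹ • 1 - (A + (u : ℂ) • 1)⁻¹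

namespace Matrix.PosDef

variable {n : Type*} [Fintype n] [DecidableEq n] {A : Matrix n n ℂ}

theorem cfc_eq_matLogIntegrand (hA : A.PosDef) {u : ℝ} (hu : 0 ≤ u) :
    cfc (fun r : ℝ => (1 + u)⁻¹ - (r + u)⁻¹) A = matLogIntegrand A u := by
  have hsa : IsSelfAdjoint A := hA.1
  rw [cfc_sub _ _ A (hg := A.finite_real_spectrum.continuousOn _), cfc_const (1 + u)⁻¹ A,
    hA.cfc_inv_add hu, Algebra.algebraMap_eq_smul_one, matLogIntegrand]

theorem integrableOn_matLogIntegrand (hA : A.PosDef) :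
    IntegrableOn (matLogIntegrand A) (Ioi 0) := by
  have : IntegrableOn (fun u : ℝ => cfc (fun r : ℝ => (1 + u)⁻¹ - (r + u)⁻¹) A) (Ioi 0) :=
    hA.1.integrable_cfc fun k => integrableOn_Ioi_inv_one_add_sub_inv_add (hA.eigenvalues_pos k)
  exact this.congr_fun (fun u (hu : 0 < u) => hA.cfc_eq_matLogIntegrand hu.le) measurableSet_Ioi

theorem integral_matLogIntegrand (hA : A.PosDef) :
    ∫ u in Ioi 0, matLogIntegrand A u = matLog A := by
  rw [← setIntegral_congr_fun measurableSet_Ioi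
      fun u (hu : 0 < u) => hA.cfc_eq_matLogIntegrand hu.le,
    hA.1.integral_cfc (μ := volume.restrict (Ioi 0)) (f := fun u r => (1 + u)⁻¹ - (r + u)⁻¹)
      fun k => integrableOn_Ioi_inv_one_add_sub_inv_add (hA.eigenvalues_pos k),
    matLog_eq_cfc hA.1]
  exact cfc_congr fun r hr => integral_Ioi_inv_one_add_sub_inv_add (hA.pos_of_mem_spectrum hr)

theorem norm_matLogIntegrand_sub_le {B : Matrix n n ℂ} (hA : A.PosDef) (hB : B.PosDef) {u : ℝ}
    (hu : 0 ≤ u) (h : ‖(A + (u : ℂ) • 1)⁻¹‖ * ‖B - A‖ ≤ 1 / 2) :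
    ‖matLogIntegrand B u - matLogIntegrand A u‖ ≤ 2 * ‖(A + (u : ℂ) • 1)⁻¹‖ ^ 2 * ‖B - A‖ := by
  have hdiff : (B + (u : ℂ) • 1) - (A + (u : ℂ) • 1) = B - A := add_sub_add_right_eq_sub ..
  simp only [matLogIntegrand, sub_sub_sub_cancel_left, nonsing_inv_eq_ringInverse] at h ⊢
  rw [← hdiff] at h ⊢
  exact norm_inverse_sub_inverse_le (hA.add_smul_one hu).isUnit (hB.add_smul_one hu).isUnit h

end Matrix.PosDef

theorem hasDerivAt_matLogIntegrand {n : Type*} [Fintype n] [DecidableEq n]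
    {ρ : ℝ → Matrix n n ℂ} {D : Matrix n n ℂ} {t₁ u : ℝ} (hρ : HasDerivAt ρ D t₁)
    (hu : IsUnit (ρ t₁ + (u : ℂ) • 1)) :
    HasDerivAt (fun t => matLogIntegrand (ρ t) u)
      ((ρ t₁ + (u : ℂ) • 1)⁻¹ * D * (ρ t₁ + (u : ℂ) • 1)⁻¹) t₁ := by
  simp only [matLogIntegrand, Matrix.nonsing_inv_eq_ringInverse]
  have := ((hρ.add_const ((u : ℂ) • 1)).ringInverse hu).const_sub ((1 + u)⁻¹ • 1)
  rw [neg_neg] at this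
  exact this

theorem matIntegral_eq_setIntegral {n : Type*} [Fintype n] {f : ℝ → Matrix n n ℂ}
    (hf : IntegrableOn f (Ioi 0)) : matIntegral f = ∫ u in Ioi 0, f u := by
  ext i j
  exact (Matrix.entryLinearMap ℝ ℂ i j).toContinuousLinearMap.integral_comp_comm hf

theorem hasDerivAt_integral_matLogIntegrand {n : Type*} [Fintype n] [DecidableEq n]
    {ρ : ℝ → Matrix n n ℂ} {D : Matrix n n ℂ} {t₁ : ℝ} (hρ : HasDerivAt ρ D t₁)
    (hpos : ∀ᶠ t in 𝓝 t₁, (ρ t).PosDef) :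
    IntegrableOn (fun u : ℝ => (ρ t₁ + (u : ℂ) • 1)⁻¹ * D * (ρ t₁ + (u : ℂ) • 1)⁻¹) (Ioi 0) ∧
      HasDerivAt (fun t => ∫ u in Ioi 0, matLogIntegrand (ρ t) u)
        (∫ u : ℝ in Ioi 0, (ρ t₁ + (u : ℂ) • 1)⁻¹ * D * (ρ t₁ + (u : ℂ) • 1)⁻¹) t₁ := by
  have hpos₁ : (ρ t₁).PosDef := hpos.self_of_nhds
  obtain ⟨M, hM, c, hc, hR⟩ := hpos₁.exists_norm_inv_add_le
  obtain ⟨L, hL⟩ := hρ.isBigO_sub.bound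
  have hclose : ∀ᶠ t in 𝓝 t₁, M * c⁻¹ * ‖ρ t - ρ t₁‖ ≤ 1 / 2 := by
    have : Tendsto (fun t => M * c⁻¹ * ‖ρ t - ρ t₁‖) (𝓝 t₁) (𝓝 0) := by
      simpa using (hρ.continuousAt.tendsto.sub_const (ρ t₁)).norm.const_mul (M * c⁻¹)
    exact this.eventually_le_const (by norm_num)
  have hR_meas : AEStronglyMeasurable (fun u : ℝ => (ρ t₁ + (u : ℂ) • 1)⁻¹)
      (volume.restrict (Ioi 0)) :=
    (hpos₁.1.aestronglyMeasurable_cfc (f := fun u r => (r + u)⁻¹) fun k => by fun_prop).congr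
      ((ae_restrict_mem measurableSet_Ioi).mono fun u (hu : 0 < u) => hpos₁.cfc_inv_add hu.le)
  refine hasDerivAt_integral_of_dominated_loc_of_lip'
    (bound := fun u => 2 * M ^ 2 * L * ((c + u) ^ 2)⁻¹) (hpos.and (hL.and hclose))
    (fun t ht => ht.1.integrableOn_matLogIntegrand.aestronglyMeasurable)
    hpos₁.integrableOn_matLogIntegrand
    ((hR_meas.fun_mul aestronglyMeasurable_const).fun_mul hR_meas) ?_
    ((integrableOn_Ioi_inv_add_sq hc).const_mul _) ?_
  · filter_upwards [ae_restrict_mem measurableSet_Ioi]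
      with u (hu : 0 < u) t ⟨ht_pos, ht_lip, ht_close⟩
    have hRu := hR u hu.le
    have hsmall : ‖(ρ t₁ + (u : ℂ) • 1)⁻¹‖ * ‖ρ t - ρ t₁‖ ≤ 1 / 2 :=
      calc _ ≤ M * c⁻¹ * ‖ρ t - ρ t₁‖ := by
            gcongr
            exact hRu.trans (by gcongr; linarith)
        _ ≤ 1 / 2 := ht_close
    calc _ ≤ 2 * ‖(ρ t₁ + (u : ℂ) • 1)⁻¹‖ ^ 2 * ‖ρ t - ρ t₁‖ :=
          hpos₁.norm_matLogIntegrand_sub_le ht_pos hu.le hsmall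
      _ ≤ 2 * (M * (c + u)⁻¹) ^ 2 * (L * ‖t - t₁‖) := by gcongr
      _ = 2 * M ^ 2 * L * ((c + u) ^ 2)⁻¹ * ‖t - t₁‖ := by rw [← inv_pow]; ring
  · filter_upwards [ae_restrict_mem measurableSet_Ioi] with u (hu : 0 < u)
    exact hasDerivAt_matLogIntegrand hρ (hpos₁.add_smul_one hu.le).isUnit

/-- If `ρ(t)` is a differentiable family of positive definite Hermitian matrices near `t₁`,
then `t ↦ log ρ(t)` is differentiable at `t₁` with derivative
`∫₀^∞ (ρ(t₁)+u)⁻¹ ρ'(t₁) (ρ(t₁)+u)⁻¹ du`. -/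
theorem matLog_hasDerivAt {d : ℕ} (ρ : ℝ → Matrix (Fin d) (Fin d) ℂ) (t₁ : ℝ)
    (h : ∀ᶠ t in nhds t₁, DifferentiableAt ℝ ρ t ∧ (ρ t).PosDef) :
    HasDerivAt (fun t => matLog (ρ t))
      (matIntegral (fun u => (ρ t₁ + (u : ℂ) • 1)⁻¹ * deriv ρ t₁ * (ρ t₁ + (u : ℂ) • 1)⁻¹))
      t₁ := by
  have hpos : ∀ᶠ t in 𝓝 t₁, (ρ t).PosDef := h.mono fun _ ht => ht.2
  obtain ⟨hint, hderiv⟩ :=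
    hasDerivAt_integral_matLogIntegrand h.self_of_nhds.1.hasDerivAt hpos
  refine (hderiv.congr_of_eventuallyEq ?_).congr_deriv (matIntegral_eq_setIntegral hint).symm
  exact hpos.mono fun t ht => ht.integral_matLogIntegrand.symm
end

section
/- Let X be a d×d positive definite Hermitian complex matrix with Tr X² = 1 and let Y be a d×d complex matrix with Tr(Y Yᴴ) = 1 and Tr(X Yᴴ) = 0, and set ρ(t) = X(t) X(t)ᴴ where X(t) = √(1−t²) X + t Y. Then there exist R > 0 and τ ∈ (0,1) such that for all t ∈ (−τ, τ): ρ(t) is positive definite, the map t ↦ S(ρ(t)) is three times differentiable at t, and the absolute value of its third derivative at t is strictly less than R. -/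
/-!
The Taylor series of `x ↦ -x log x` at `M > 0` converges for `|x - M| < M`. Hence, in the operator
norm, the entropy of a Hermitian matrix `A` with `‖A - M‖ < M` equals `Re tr (∑ₖ cₖ (A - M)ᵏ)`,
an analytic function of `A`. For `M = ‖ρ(0)‖` the positive definite matrix `ρ(0)` lies in this
ball, hence so does `ρ(t)` for small `t`; there `ρ(t)` is positive definite and `S(ρ(t))` is a
smooth function of `t`, so its third derivative is continuous and thus bounded near `0`.
-/

open Matrix
open scoped Kronecker ComplexOrder

attribute [local instance] Matrix.frobeniusNormedAddCommGroup Matrix.frobeniusNormedSpace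

/-- The curve `X(t) = √(1−t²) X + t Y`. -/
noncomputable def curveM {p q : Type*} (X Y : Matrix p q ℂ) (t : ℝ) : Matrix p q ℂ :=
  (Real.sqrt (1 - t ^ 2) : ℂ) • X + (t : ℂ) • Y

-- The operator norm, unlike the Frobenius norm, makes square matrices a C⋆-algebra.
attribute [-instance] Matrix.frobeniusNormedAddCommGroup Matrix.frobeniusNormedSpace

open Real
open scoped Matrix.Norms.L2Operator Topology

noncomputable def negMulLogTaylorCoeff (M : ℝ) : ℕ → ℝ
  | 0 => negMulLog M
  | 1 => -(log M + 1)
  | (n + 2) => (-1) ^ (n + 1) / ((n + 2) * (n + 1) * M ^ (n + 1))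

section negMulLogTaylorCoeff

variable {M : ℝ}

lemma abs_negMulLogTaylorCoeff_le (hM : 0 < M) (n : ℕ) :
    |negMulLogTaylorCoeff M (n + 2)| ≤ (1 / M) ^ (n + 1) := by
  have hn : (1 : ℝ) ≤ (n + 2) * (n + 1) := by nlinarith [n.cast_nonneg (α := ℝ)]
  rw [negMulLogTaylorCoeff, abs_div, abs_pow, abs_neg, abs_one, one_pow,
    abs_of_pos (by positivity), div_pow, one_pow]
  exact one_div_le_one_div_of_le (by positivity) (le_mul_of_one_le_left (by positivity) hn)

lemma summable_abs_negMulLogTaylorCoeff_mul_pow (hM : 0 < M) {r : ℝ} (hr0 : 0 ≤ r)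
    (hr : r < M) :
    Summable fun k => |negMulLogTaylorCoeff M k| * r ^ k := by
  refine (summable_nat_add_iff 2).mp <|
    ((summable_geometric_of_lt_one (by positivity) ((div_lt_one hM).mpr hr)).mul_left
      (r ^ 2 / M)).of_nonneg_of_le (fun n => by positivity) fun n => ?_
  calc |negMulLogTaylorCoeff M (n + 2)| * r ^ (n + 2) ≤ (1 / M) ^ (n + 1) * r ^ (n + 2) := by
        gcongr; exact abs_negMulLogTaylorCoeff_le hM n
    _ = r ^ 2 / M * (r / M) ^ n := by
        rw [div_pow, div_pow, one_pow, pow_succ, pow_add]; field_simp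

lemma hasSum_negMulLogTaylorCoeff_mul_pow (hM : 0 < M) {y : ℝ} (hy : |y| < M) :
    HasSum (fun k => negMulLogTaylorCoeff M k * y ^ k) (negMulLog (M + y)) := by
  -- `negMulLog (M + y) = -M (1 + u) (log M + log (1 + u))` with `u = y / M`; expand `log (1 + u)`.
  set u := y / M
  have hyu : y = M * u := (mul_div_cancel₀ y hM.ne').symm
  have hu : |u| < 1 := by rwa [abs_div, abs_of_pos hM, div_lt_one hM]
  have hlog : HasSum (fun n : ℕ => (-u) ^ (n + 1) / (n + 1)) (-log (1 + u)) := by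
    simpa using Real.hasSum_pow_div_log_of_abs_lt_one (x := -u) (by rwa [abs_neg])
  have hlog' : HasSum (fun n : ℕ => (-u) ^ (n + 2) / (n + 2)) (-log (1 + u) + u) := by
    have := (hasSum_nat_add_iff (f := fun n : ℕ => (-u) ^ (n + 1) / (n + 1))
      (g := -log (1 + u) + u) 1).mpr (by simpa using hlog)
    simpa [add_assoc, one_add_one_eq_two] using this
  have hterm : (fun n => negMulLogTaylorCoeff M (n + 2) * y ^ (n + 2)) = fun n : ℕ =>
      M * u * ((-u) ^ (n + 1) / (n + 1)) + M * ((-u) ^ (n + 2) / (n + 2)) := by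
    funext n
    simp only [negMulLogTaylorCoeff, hyu]
    field_simp
    ring
  have htail := (hasSum_nat_add_iff (f := fun k => negMulLogTaylorCoeff M k * y ^ k) 2).mp
    (hterm ▸ (hlog.mul_left (M * u)).add (hlog'.mul_left M))
  have h1u : 0 < 1 + u := by linarith [(abs_lt.mp hu).1]
  suffices h : M * u * -log (1 + u) + M * (-log (1 + u) + u) +
      ∑ k ∈ Finset.range 2, negMulLogTaylorCoeff M k * y ^ k = negMulLog (M + y) from h ▸ htail
  rw [hyu, show M + M * u = M * (1 + u) by ring, negMulLog, log_mul hM.ne' h1u.ne']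
  simp [Finset.sum_range_succ, negMulLogTaylorCoeff, negMulLog]
  ring

end negMulLogTaylorCoeff

noncomputable def negMulLogSeries (E : Type*) [NormedRing E] [NormedAlgebra ℂ E] (M : ℝ) :
    FormalMultilinearSeries ℂ E E :=
  .ofScalars E fun k => (negMulLogTaylorCoeff M k : ℂ)

lemma le_radius_negMulLogSeries {E : Type*} [NormedRing E] [NormedAlgebra ℂ E] [NormOneClass E]
    {M : ℝ} (hM : 0 < M) : ENNReal.ofReal M ≤ (negMulLogSeries E M).radius := by
  refine ENNReal.le_of_forall_nnreal_lt fun r hr =>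
    (negMulLogSeries E M).le_radius_of_summable ?_
  have hrM : (r : ℝ) < M := by
    simpa using (ENNReal.lt_ofReal_iff_toReal_lt ENNReal.coe_ne_top).mp hr
  simpa [negMulLogSeries, FormalMultilinearSeries.ofScalars_norm] using
    summable_abs_negMulLogTaylorCoeff_mul_pow hM r.2 hrM

lemma mem_eball_radius_negMulLogSeries {E : Type*} [NormedRing E] [NormedAlgebra ℂ E]
    [NormOneClass E] {M : ℝ} {B : E} (hB : ‖B‖ < M) :
    B ∈ Metric.eball 0 (negMulLogSeries E M).radius := by
  have hM : 0 < M := (norm_nonneg _).trans_lt hB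
  refine lt_of_lt_of_le ?_ (le_radius_negMulLogSeries hM)
  simpa [edist_zero_right, ← ofReal_norm] using (ENNReal.ofReal_lt_ofReal_iff hM).mpr hB

lemma analyticAt_negMulLogSeries_sum {E : Type*} [NormedRing E] [NormedAlgebra ℂ E]
    [NormOneClass E] [CompleteSpace E] {M : ℝ} {B : E} (hB : ‖B‖ < M) :
    AnalyticAt ℂ (negMulLogSeries E M).sum B :=
  ((negMulLogSeries E M).hasFPowerSeriesOnBall
    (pos_of_gt (mem_eball_radius_negMulLogSeries hB))).analyticAt_of_mem
    (mem_eball_radius_negMulLogSeries hB)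

namespace Matrix

variable {n : Type*} [Fintype n] [DecidableEq n] {A : Matrix n n ℂ}

namespace IsHermitian

lemma abs_eigenvalues_sub_le_norm (hA : A.IsHermitian) (M : ℝ) (i : n) :
    |hA.eigenvalues i - M| ≤ ‖A - algebraMap ℝ _ M‖ := by
  have : Nonempty n := ⟨i⟩
  have hmem : hA.eigenvalues i - M ∈ spectrum ℝ (A - algebraMap ℝ _ M) := by
    rw [← spectrum.sub_singleton_eq]
    exact Set.sub_mem_sub (hA.eigenvalues_mem_spectrum_real i) rfl
  simpa using spectrum.norm_le_norm_of_mem hmem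

lemma exists_norm_sub_algebraMap_eq [Nonempty n] (hA : A.IsHermitian) (M : ℝ) :
    ∃ i, ‖A - algebraMap ℝ _ M‖ = |hA.eigenvalues i - M| := by
  have hsa : IsSelfAdjoint (A - algebraMap ℝ _ M) :=
    hA.isSelfAdjoint.sub (.algebraMap _ (.all M))
  have hspec := CStarAlgebra.norm_or_neg_norm_mem_spectrum hsa
  rw [← spectrum.sub_singleton_eq, hA.spectrum_real_eq_range_eigenvalues] at hspec
  rcases hspec with ⟨_, ⟨i, rfl⟩, _, rfl, hi⟩ | ⟨_, ⟨i, rfl⟩, _, rfl, hi⟩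
  exacts [⟨i, ((abs_eq (norm_nonneg _)).mpr (.inl hi)).symm⟩,
    ⟨i, ((abs_eq (norm_nonneg _)).mpr (.inr hi)).symm⟩]

lemma trace_cfc (hA : A.IsHermitian) (f : ℝ → ℝ) :
    (cfc f A).trace = ∑ i, (f (hA.eigenvalues i) : ℂ) := by
  rw [hA.cfc_eq, Matrix.IsHermitian.cfc, Unitary.conjStarAlgAut_apply, trace_mul_cycle,
    Unitary.coe_star_mul_self, one_mul, trace_diagonal]
  rfl

lemma trace_sub_algebraMap_pow (hA : A.IsHermitian) (M : ℝ) (k : ℕ) :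
    ((A - algebraMap ℝ _ M) ^ k).trace = ∑ i, (((hA.eigenvalues i - M) ^ k : ℝ) : ℂ) := by
  have := hA.isSelfAdjoint
  rw [← hA.trace_cfc (fun x => (x - M) ^ k), cfc_pow (fun x => x - M) k A,
    cfc_sub (fun x => x) (fun _ => M) A, cfc_id' ℝ A, cfc_const M A]

lemma posDef_of_norm_sub_algebraMap_lt (hA : A.IsHermitian) {M : ℝ}
    (h : ‖A - algebraMap ℝ _ M‖ < M) :
    A.PosDef :=
  hA.posDef_iff_eigenvalues_pos.mpr fun i => by
    linarith [(abs_lt.mp ((hA.abs_eigenvalues_sub_le_norm M i).trans_lt h)).1]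

end IsHermitian

lemma PosDef.norm_sub_algebraMap_norm_lt [Nonempty n] (hA : A.PosDef) :
    ‖A - algebraMap ℝ _ ‖A‖‖ < ‖A‖ := by
  obtain ⟨i, hi⟩ := hA.isHermitian.exists_norm_sub_algebraMap_eq ‖A‖
  have hle : |hA.isHermitian.eigenvalues i| ≤ ‖A‖ := by
    simpa using hA.isHermitian.abs_eigenvalues_sub_le_norm 0 i
  rw [hi, abs_sub_lt_iff]
  constructor <;> linarith [hA.eigenvalues_pos i, le_abs_self (hA.isHermitian.eigenvalues i)]

end Matrix

section Entropy

variable {n : Type*} [Fintype n] [DecidableEq n] {A : Matrix n n ℂ} {M : ℝ}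

lemma entropy_eq_sum_negMulLog (hA : A.IsHermitian) :
    entropy A = ∑ i, negMulLog (hA.eigenvalues i) := by
  simp [entropy, hA, negMulLog]

lemma trace_negMulLogSeries_sum [Nonempty n] (hA : A.IsHermitian)
    (h : ‖A - algebraMap ℝ _ M‖ < M) :
    ((negMulLogSeries (Matrix n n ℂ) M).sum (A - algebraMap ℝ _ M)).trace
      = ∑ i, (negMulLog (hA.eigenvalues i) : ℂ) := by
  have hM : 0 < M := (norm_nonneg _).trans_lt h
  have hsum := ((Matrix.traceLinearMap n ℂ ℂ).toContinuousLinearMap.hasSum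
    ((negMulLogSeries (Matrix n n ℂ) M).hasSum (mem_eball_radius_negMulLogSeries h)))
  refine hsum.unique ?_
  simp only [negMulLogSeries, FormalMultilinearSeries.ofScalars_apply_eq,
    LinearMap.coe_toContinuousLinearMap', Matrix.traceLinearMap_apply, Matrix.trace_smul,
    hA.trace_sub_algebraMap_pow, Finset.mul_sum, smul_eq_mul]
  refine hasSum_sum fun i _ => ?_
  have := hasSum_negMulLogTaylorCoeff_mul_pow hM ((hA.abs_eigenvalues_sub_le_norm M i).trans_lt h)
  rw [add_sub_cancel] at this
  exact_mod_cast Complex.hasSum_ofReal.mpr this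

lemma entropy_eq_re_trace_negMulLogSeries_sum [Nonempty n] (hA : A.IsHermitian)
    (h : ‖A - algebraMap ℝ _ M‖ < M) :
    entropy A = ((negMulLogSeries (Matrix n n ℂ) M).sum (A - algebraMap ℝ _ M)).trace.re := by
  rw [trace_negMulLogSeries_sum hA h, ← Complex.ofReal_sum, Complex.ofReal_re,
    entropy_eq_sum_negMulLog hA]

lemma contDiffAt_re_trace_negMulLogSeries_sum [Nonempty n] (h : ‖A - algebraMap ℝ _ M‖ < M)
    {k : WithTop ℕ∞} :
    ContDiffAt ℝ k
      (fun B => ((negMulLogSeries (Matrix n n ℂ) M).sum (B - algebraMap ℝ _ M)).trace.re) A := by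
  have hsum := ((analyticAt_negMulLogSeries_sum h).contDiffAt (n := k)).restrict_scalars ℝ
  exact (Complex.reCLM.comp ((Matrix.traceLinearMap n ℂ ℂ).toContinuousLinearMap.restrictScalars
    ℝ)).contDiff.contDiffAt.comp A (hsum.comp A (contDiffAt_id.sub contDiffAt_const))

end Entropy

lemma contDiffAt_curveM {p q : Type*} [Fintype p] [Fintype q] [DecidableEq q]
    (X Y : Matrix p q ℂ) {t : ℝ} (ht : 1 - t ^ 2 ≠ 0) {k : WithTop ℕ∞} :
    ContDiffAt ℝ k (curveM X Y) t := by
  have hsqrt : ContDiffAt ℝ k (fun s : ℝ => (Real.sqrt (1 - s ^ 2) : ℂ)) t :=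
    Complex.ofRealCLM.contDiff.contDiffAt.comp t <| (Real.contDiffAt_sqrt ht).comp t (by fun_prop)
  exact (hsqrt.smul contDiffAt_const).add
    ((Complex.ofRealCLM.contDiff.contDiffAt).smul contDiffAt_const)

lemma conjTranspose_curveM {p q : Type*} (X Y : Matrix p q ℂ) (t : ℝ) :
    (curveM X Y t)ᴴ = curveM Xᴴ Yᴴ t := by
  simp [curveM, Matrix.conjTranspose_smul]

lemma contDiffAt_curveM_mul_conjTranspose {n : Type*} [Fintype n] [DecidableEq n]
    (X Y : Matrix n n ℂ) {t : ℝ} (ht : 1 - t ^ 2 ≠ 0) {k : WithTop ℕ∞} :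
    ContDiffAt ℝ k (fun s => curveM X Y s * (curveM X Y s)ᴴ) t := by
  simp_rw [conjTranspose_curveM]
  exact (contDiffAt_curveM X Y ht).mul (contDiffAt_curveM Xᴴ Yᴴ ht)

lemma ContDiffAt.eventually_differentiableAt_and_abs_deriv_deriv_deriv_lt {g : ℝ → ℝ} {x : ℝ}
    (h : ContDiffAt ℝ 3 g x) :
    ∀ᶠ t in 𝓝 x, DifferentiableAt ℝ g t ∧ DifferentiableAt ℝ (deriv g) t ∧
      DifferentiableAt ℝ (deriv (deriv g)) t ∧
      |deriv (deriv (deriv g)) t| < |deriv (deriv (deriv g)) x| + 1 := by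
  have h1 : ContDiffAt ℝ 2 (deriv g) x := h.derivWithin (by norm_num)
  have h2 : ContDiffAt ℝ 1 (deriv (deriv g)) x := h1.derivWithin (by norm_num)
  have h3 := (h2.derivWithin (m := 0) (by norm_num)).continuousAt.abs
  filter_upwards [h.eventually (by simp), h1.eventually (by simp), h2.eventually (by simp),
    h3.eventually_lt continuousAt_const (lt_add_one _)] with t ht0 ht1 ht2 ht3
  exact ⟨ht0.differentiableAt (by norm_num), ht1.differentiableAt (by norm_num),
    ht2.differentiableAt one_ne_zero, ht3⟩

theorem entropy_third_deriv_bound_general {d : ℕ} (X Y : Matrix (Fin d) (Fin d) ℂ)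
    (hX : X.PosDef) (hX1 : (X * X).trace = 1)
    (g : ℝ → ℝ) (hg : g = fun t => entropy (curveM X Y t * (curveM X Y t)ᴴ)) :
    ∃ R : ℝ, 0 < R ∧ ∃ τ : ℝ, 0 < τ ∧ τ < 1 ∧ ∀ t ∈ Set.Ioo (-τ) τ,
      (curveM X Y t * (curveM X Y t)ᴴ).PosDef ∧
      DifferentiableAt ℝ g t ∧ DifferentiableAt ℝ (deriv g) t ∧
      DifferentiableAt ℝ (deriv (deriv g)) t ∧
      |deriv (deriv (deriv g)) t| < R := by
  have : Nonempty (Fin d) := by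
    refine Fin.pos_iff_nonempty.mp (Nat.pos_of_ne_zero fun hd => ?_)
    subst hd
    simp [Matrix.trace] at hX1
  set ρ := fun t : ℝ => curveM X Y t * (curveM X Y t)ᴴ
  have hρ : ContDiffAt ℝ 3 ρ 0 := contDiffAt_curveM_mul_conjTranspose X Y (by norm_num)
  have hρ0 : (ρ 0).PosDef := by
    simpa [ρ, curveM] using Matrix.PosDef.mul_conjTranspose_self X
      (Matrix.vecMul_injective_iff_isUnit.mpr hX.isUnit)
  set M := ‖ρ 0‖
  have hnear : ∀ᶠ t in 𝓝 0, ‖ρ t - algebraMap ℝ _ M‖ < M :=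
    (hρ.continuousAt.sub continuousAt_const).norm.eventually_lt continuousAt_const
      hρ0.norm_sub_algebraMap_norm_lt
  have hg0 : ContDiffAt ℝ 3 g 0 := by
    refine ((contDiffAt_re_trace_negMulLogSeries_sum hρ0.norm_sub_algebraMap_norm_lt).comp 0
      hρ).congr_of_eventuallyEq (hnear.mono fun t ht => ?_)
    rw [hg]
    exact entropy_eq_re_trace_negMulLogSeries_sum (Matrix.isHermitian_mul_conjTranspose_self _) ht
  obtain ⟨τ, hτ, hball⟩ := Metric.eventually_nhds_iff.mp
    (hnear.and hg0.eventually_differentiableAt_and_abs_deriv_deriv_deriv_lt)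
  refine ⟨|deriv (deriv (deriv g)) 0| + 1, by positivity, min τ (1 / 2), lt_min hτ (by norm_num),
    min_lt_of_right_lt (by norm_num), fun t ht => ?_⟩
  have ht : dist t 0 < τ := by
    rw [Real.dist_0_eq_abs, abs_lt]
    constructor <;> linarith [ht.1, ht.2, min_le_left τ (1 / 2)]
  obtain ⟨htM, htg⟩ := hball ht
  exact ⟨(Matrix.isHermitian_mul_conjTranspose_self _).posDef_of_norm_sub_algebraMap_lt htM, htg⟩

/-- For `X` positive definite with `Tr X² = 1` and `Y` with `Tr(Y Yᴴ) = 1`, `Tr(X Yᴴ) = 0`,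
setting `ρ(t) = X(t) X(t)ᴴ` with `X(t) = √(1−t²) X + t Y`, there are `R > 0` and
`τ ∈ (0,1)` such that on `(−τ, τ)` the matrix `ρ(t)` is positive definite, `t ↦ S(ρ(t))`
is three times differentiable, and its third derivative has absolute value `< R`. -/
theorem entropy_third_deriv_bound {d : ℕ} (X Y : Matrix (Fin d) (Fin d) ℂ)
    (hX : X.PosDef) (hX1 : (X * X).trace = 1)
    (hY1 : (Y * Yᴴ).trace = 1) (hXY : (X * Yᴴ).trace = 0)
    (g : ℝ → ℝ) (hg : g = fun t => entropy (curveM X Y t * (curveM X Y t)ᴴ)) :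
    ∃ R : ℝ, 0 < R ∧ ∃ τ : ℝ, 0 < τ ∧ τ < 1 ∧ ∀ t ∈ Set.Ioo (-τ) τ,
      (curveM X Y t * (curveM X Y t)ᴴ).PosDef ∧
      DifferentiableAt ℝ g t ∧ DifferentiableAt ℝ (deriv g) t ∧
      DifferentiableAt ℝ (deriv (deriv g)) t ∧
      |deriv (deriv (deriv g)) t| < R :=
  entropy_third_deriv_bound_general X Y hX hX1 g hg
end
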